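/- arXiv:2209.14135 — 9 statements merged into one kernel-verified Lean document; each statement's English description precedes it below -/
import Mathlib

section
/- Let u, v : (0,∞) → ℝ belong to W^{1,1}_0(0,∞) (i.e. u, v and their weak derivatives are integrable on (0,∞) and u(0)=v(0)=0), extended by zero to (-∞,0]. If the functions x ↦ D⁻_μ v(x) and x ↦ D⁺_μ u(x) belong to L¹(0,∞), then the integration by parts formula holds: ∫_0^∞ u(x) (D⁻_μ v(x)) dx = ∫_0^∞ (D⁺_μ u(x)) v(x) dx. -/
open MeasureTheory Set Filter Function
open scoped ENNReal

/-!
For fixed `y`, the substitution `x ↦ x - y` turns `∫ u(x) (v(x) - v(x + y)) dx` into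
`∫ (u(x) - u(x - y)) v(x) dx`, so the formula is Fubini's theorem in `(x, y)` for `dx ⊗ μ`.
Both kernels are integrable because `u` and `v` are bounded and
`∫ |f(x + y) - f(x)| dx ≤ C min(1, y)` for `f = u, v`: by the fundamental theorem of calculus
for `y ≤ 1` and by `2 ‖f‖₁` for `y ≥ 1`; the weight `min(1, y)` is `μ`-integrable.
-/

theorem sigmaFinite_of_lintegral_ne_top {α : Type*} [MeasurableSpace α] {ν : Measure α}
    {w : α → ℝ≥0∞} (hw : Measurable w) (hpos : ∀ᵐ x ∂ν, w x ≠ 0) (hint : ∫⁻ x, w x ∂ν ≠ ⊤) :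
    SigmaFinite ν := by
  refine Measure.sigmaFinite_of_countable
    ((countable_range fun n : ℕ => {x | (n : ℝ≥0∞)⁻¹ ≤ w x}).insert {x | w x = 0}) ?_ ?_
  · rintro s (rfl | ⟨n, rfl⟩)
    · exact (measure_mono_null (fun x hx => not_not.2 hx) (ae_iff.1 hpos)).trans_lt
        ENNReal.zero_lt_top
    · have hn : (n : ℝ≥0∞)⁻¹ ≠ 0 := ENNReal.inv_ne_zero.2 (ENNReal.natCast_ne_top n)
      have hmarkov : ν {x | (n : ℝ≥0∞)⁻¹ ≤ w x} ≤ (∫⁻ x, w x ∂ν) / (n : ℝ≥0∞)⁻¹ := by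
        rw [ENNReal.le_div_iff_mul_le (Or.inl hn) (Or.inr hint), mul_comm]
        exact mul_meas_ge_le_lintegral hw _
      exact hmarkov.trans_lt (ENNReal.div_lt_top hint hn)
  · refine eq_univ_of_forall fun x => ?_
    by_cases hx : w x = 0
    · exact ⟨_, mem_insert _ _, hx⟩
    · obtain ⟨n, hn⟩ := ENNReal.exists_inv_nat_lt hx
      exact ⟨_, mem_insert_of_mem _ ⟨n, rfl⟩, hn.le⟩

theorem integrable_prod_of_lintegral_enorm_le {α β E : Type*} [MeasurableSpace α]
    [MeasurableSpace β] [NormedAddCommGroup E] {ρ : Measure α} {ν : Measure β} [SFinite ρ]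
    [SFinite ν] {K : α × β → E} (hK : AEStronglyMeasurable K (ρ.prod ν)) {w : β → ℝ≥0∞}
    (hw : ∫⁻ y, w y ∂ν ≠ ⊤) {C : ℝ≥0∞} (hC : C ≠ ⊤)
    (hbound : ∀ᵐ y ∂ν, ∫⁻ x, ‖K (x, y)‖ₑ ∂ρ ≤ C * w y) :
    Integrable K (ρ.prod ν) := by
  refine ⟨hK, ?_⟩
  calc ∫⁻ p, ‖K p‖ₑ ∂ρ.prod ν = ∫⁻ y, ∫⁻ x, ‖K (x, y)‖ₑ ∂ρ ∂ν :=
        lintegral_prod_symm _ hK.enorm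
    _ ≤ ∫⁻ y, C * w y ∂ν := lintegral_mono_ae hbound
    _ = C * ∫⁻ y, w y ∂ν := lintegral_const_mul' _ _ hC
    _ < ⊤ := ENNReal.mul_lt_top hC.lt_top hw.lt_top

theorem lintegral_setLIntegral_Ioc_add {g : ℝ → ℝ≥0∞} (hg : AEMeasurable g) (y : ℝ) :
    ∫⁻ x, ∫⁻ s in Ioc x (x + y), g s = ENNReal.ofReal y * ∫⁻ s, g s := by
  have hmem : ∀ x s : ℝ, s ∈ Ioc x (x + y) ↔ x ∈ Ico (s - y) s := fun x s => by
    simp only [mem_Ioc, mem_Ico]; constructor <;> rintro ⟨h₁, h₂⟩ <;> constructor <;> linarith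
  have hmeas : AEMeasurable (uncurry fun x s => (Ioc x (x + y)).indicator g s)
      (volume.prod volume) := by
    have hset : MeasurableSet {p : ℝ × ℝ | p.1 < p.2 ∧ p.2 ≤ p.1 + y} :=
      (measurableSet_lt measurable_fst measurable_snd).inter
        (measurableSet_le measurable_snd (measurable_fst.add_const y))
    refine ((hg.comp_quasiMeasurePreserving Measure.quasiMeasurePreserving_snd).indicator
      hset).congr (ae_of_all _ fun p => ?_)
    simp [indicator, uncurry, mem_Ioc]
  calc ∫⁻ x, ∫⁻ s in Ioc x (x + y), g s
      = ∫⁻ s, ∫⁻ x, (Ioc x (x + y)).indicator g s := by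
        simp_rw [← lintegral_indicator measurableSet_Ioc]
        exact lintegral_lintegral_swap hmeas
    _ = ∫⁻ s, g s * ENNReal.ofReal y := by
        refine lintegral_congr fun s => ?_
        have hind : ∀ x,
            (Ioc x (x + y)).indicator g s = (Ico (s - y) s).indicator (fun _ => g s) x :=
          fun x => by simp only [indicator, hmem]
        rw [lintegral_congr hind, lintegral_indicator_const measurableSet_Ico, Real.volume_Ico,
          sub_sub_cancel]
    _ = ENNReal.ofReal y * ∫⁻ s, g s := by
        rw [lintegral_mul_const' _ _ ENNReal.ofReal_ne_top, mul_comm]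

theorem lintegral_enorm_comp_add_sub_le_two_mul {f : ℝ → ℝ} (hf : AEMeasurable f) (y : ℝ) :
    ∫⁻ x, ‖f (x + y) - f x‖ₑ ≤ 2 * ∫⁻ x, ‖f x‖ₑ :=
  calc ∫⁻ x, ‖f (x + y) - f x‖ₑ ≤ ∫⁻ x, (‖f (x + y)‖ₑ + ‖f x‖ₑ) :=
        lintegral_mono fun _ => enorm_sub_le
    _ = 2 * ∫⁻ x, ‖f x‖ₑ := by
        rw [lintegral_add_right' _ hf.enorm, lintegral_add_right_eq_self (fun x => ‖f x‖ₑ) y,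
          two_mul]

section VanishingOnNonpos

variable {f f' : ℝ → ℝ}

theorem measurable_of_hasDerivAt_Ioi (hf0 : ∀ x ≤ (0:ℝ), f x = 0)
    (hf : ∀ x ∈ Ioi (0:ℝ), HasDerivAt f (f' x) x) : Measurable f := by
  classical
  have hpiece : (Ioi (0:ℝ)).piecewise f 0 = f := by
    ext x
    by_cases hx : x ∈ Ioi (0:ℝ)
    · simp [hx]
    · simp [hx, hf0 x (not_lt.1 hx)]
  rw [← hpiece]
  exact ContinuousOn.measurable_piecewise
    (fun x hx => (hf x hx).continuousAt.continuousWithinAt) continuousOn_const measurableSet_Ioi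

theorem integrable_of_integrableOn_Ioi (hf0 : ∀ x ≤ (0:ℝ), f x = 0)
    (hfi : IntegrableOn f (Ioi 0)) : Integrable f :=
  (integrableOn_iff_integrable_of_support_subset
    fun x hx => not_le.1 fun h => hx (hf0 x h)).1 hfi

theorem sub_eq_setIntegral_Ioc_of_hasDerivAt_Ioi
    (hf : ∀ x ∈ Ioi (0:ℝ), HasDerivAt f (f' x) x) (hf' : IntegrableOn f' (Ioi 0))
    {a b : ℝ} (ha : 0 < a) (hab : a ≤ b) :
    f b - f a = ∫ s in Ioc a b, f' s := by
  have hsub : Ioc a b ⊆ Ioi 0 := fun x hx => ha.trans hx.1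
  rw [← intervalIntegral.integral_of_le hab, intervalIntegral.integral_eq_sub_of_hasDerivAt
    (fun x hx => hf x (ha.trans_le (uIcc_of_le hab ▸ hx).1))
    ((intervalIntegrable_iff_integrableOn_Ioc_of_le hab).2 (hf'.mono_set hsub))]

theorem exists_norm_le_of_hasDerivAt_Ioi (hf0 : ∀ x ≤ (0:ℝ), f x = 0)
    (hf : ∀ x ∈ Ioi (0:ℝ), HasDerivAt f (f' x) x) (hf' : IntegrableOn f' (Ioi 0)) :
    ∃ M, ∀ x, ‖f x‖ ≤ M := by
  set G := ∫ s in Ioi (0:ℝ), ‖f' s‖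
  have hvar : ∀ a b : ℝ, 0 < a → a ≤ b → ‖f b - f a‖ ≤ G := by
    intro a b ha hab
    rw [sub_eq_setIntegral_Ioc_of_hasDerivAt_Ioi hf hf' ha hab]
    exact (norm_integral_le_integral_norm _).trans
      (setIntegral_mono_set hf'.norm (ae_of_all _ fun _ => norm_nonneg _)
        (Eventually.of_forall fun x hx => ha.trans hx.1))
  refine ⟨‖f 1‖ + G, fun x => ?_⟩
  rcases le_or_gt x 0 with hx | hx
  · rw [hf0 x hx, norm_zero]
    exact add_nonneg (norm_nonneg _) (integral_nonneg fun _ => norm_nonneg _)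
  · have hdiff : ‖f x - f 1‖ ≤ G := by
      rcases le_total x 1 with h | h
      · rw [norm_sub_rev]; exact hvar x 1 hx h
      · exact hvar 1 x one_pos h
    calc ‖f x‖ = ‖f 1 + (f x - f 1)‖ := by rw [add_sub_cancel]
      _ ≤ ‖f 1‖ + G := (norm_add_le _ _).trans (add_le_add_right hdiff _)

theorem lintegral_enorm_comp_add_sub_le (hf0 : ∀ x ≤ (0:ℝ), f x = 0)
    (hf : ∀ x ∈ Ioi (0:ℝ), HasDerivAt f (f' x) x) (hf' : IntegrableOn f' (Ioi 0))
    {M : ℝ} (hM : ∀ x, ‖f x‖ ≤ M) {y : ℝ} (hy : 0 ≤ y) :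
    ∫⁻ x, ‖f (x + y) - f x‖ₑ ≤
      ENNReal.ofReal y * (ENNReal.ofReal M + ∫⁻ s in Ioi 0, ‖f' s‖ₑ) := by
  set g : ℝ → ℝ≥0∞ := (Ioi 0).indicator fun s => ‖f' s‖ₑ
  have hg : AEMeasurable g :=
    (hf'.integrable_indicator measurableSet_Ioi).aemeasurable.enorm.congr
      (ae_of_all _ fun s => enorm_indicator_eq_indicator_enorm _ s)
  -- `f` may jump at `0`, so on the window `(-y, 0]` only the bound `M` is available.
  have hpt : ∀ x, ‖f (x + y) - f x‖ₑ ≤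
      (Ioc (-y) 0).indicator (fun _ => ENNReal.ofReal M) x + ∫⁻ s in Ioc x (x + y), g s := by
    intro x
    rcases le_or_gt x 0 with hx | hx
    · rw [hf0 x hx, sub_zero]
      rcases le_or_gt (x + y) 0 with hxy | hxy
      · simp [hf0 _ hxy]
      · rw [indicator_of_mem (show x ∈ Ioc (-y) 0 from ⟨by linarith, hx⟩)]
        exact (ofReal_norm (f (x + y)) ▸ ENNReal.ofReal_le_ofReal (hM _)).trans le_self_add
    · have hsub : Ioc x (x + y) ⊆ Ioi 0 := fun s hs => hx.trans hs.1
      rw [sub_eq_setIntegral_Ioc_of_hasDerivAt_Ioi hf hf' hx (le_add_of_nonneg_right hy),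
        setLIntegral_congr_fun measurableSet_Ioc fun s hs => indicator_of_mem (hsub hs) _]
      exact (enorm_integral_le_lintegral_enorm _).trans le_add_self
  calc ∫⁻ x, ‖f (x + y) - f x‖ₑ
      ≤ ∫⁻ x, ((Ioc (-y) 0).indicator (fun _ => ENNReal.ofReal M) x
          + ∫⁻ s in Ioc x (x + y), g s) := lintegral_mono hpt
    _ = ENNReal.ofReal M * ENNReal.ofReal y + ENNReal.ofReal y * ∫⁻ s, g s := by
      rw [lintegral_add_left (measurable_const.indicator measurableSet_Ioc),
        lintegral_indicator_const measurableSet_Ioc, Real.volume_Ioc, zero_sub, neg_neg,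
        lintegral_setLIntegral_Ioc_add hg y]
    _ = _ := by rw [lintegral_indicator measurableSet_Ioi]; ring

theorem exists_lintegral_enorm_comp_add_sub_le_mul_min (hf0 : ∀ x ≤ (0:ℝ), f x = 0)
    (hf : ∀ x ∈ Ioi (0:ℝ), HasDerivAt f (f' x) x) (hf' : IntegrableOn f' (Ioi 0))
    (hfi : IntegrableOn f (Ioi 0)) :
    ∃ C ≠ ⊤, ∀ y, 0 ≤ y → ∫⁻ x, ‖f (x + y) - f x‖ₑ ≤ C * ENNReal.ofReal (min 1 y) := by
  obtain ⟨M, hM⟩ := exists_norm_le_of_hasDerivAt_Ioi hf0 hf hf'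
  set A := ENNReal.ofReal M + ∫⁻ s in Ioi 0, ‖f' s‖ₑ
  set B := 2 * ∫⁻ x, ‖f x‖ₑ
  have hA : A ≠ ⊤ := ENNReal.add_ne_top.2 ⟨ENNReal.ofReal_ne_top, hf'.2.ne⟩
  have hB : B ≠ ⊤ := ENNReal.mul_ne_top ENNReal.ofNat_ne_top
    (integrable_of_integrableOn_Ioi hf0 hfi).2.ne
  refine ⟨A + B, ENNReal.add_ne_top.2 ⟨hA, hB⟩, fun y hy => ?_⟩
  rcases le_total y 1 with h1 | h1
  · rw [min_eq_right h1, mul_comm]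
    exact (lintegral_enorm_comp_add_sub_le hf0 hf hf' hM hy).trans
      (mul_le_mul' le_rfl le_self_add)
  · rw [min_eq_left h1, ENNReal.ofReal_one, mul_one]
    exact (lintegral_enorm_comp_add_sub_le_two_mul
      (measurable_of_hasDerivAt_Ioi hf0 hf).aemeasurable y).trans le_add_self

end VanishingOnNonpos

theorem integral_mul_sub_comp_add_eq {u v : ℝ → ℝ} (hu : AEStronglyMeasurable u) {M : ℝ}
    (hM : ∀ x, ‖u x‖ ≤ M) (hv : Integrable v) (y : ℝ) :
    ∫ x, u x * (v x - v (x + y)) = ∫ x, (u x - u (x - y)) * v x := by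
  have huv : Integrable fun x => u x * v x := hv.bdd_mul hu (ae_of_all _ hM)
  have huv_add : Integrable fun x => u x * v (x + y) :=
    (hv.comp_add_right y).bdd_mul hu (ae_of_all _ hM)
  have huv_sub : Integrable fun x => u (x - y) * v x := by
    simpa using huv_add.comp_sub_right y
  have hshift : ∫ x, u x * v (x + y) = ∫ x, u (x - y) * v x := by
    simpa using (integral_sub_right_eq_self (fun x => u x * v (x + y)) y).symm
  simp_rw [mul_sub, sub_mul]
  rw [integral_sub huv huv_add, integral_sub huv huv_sub, hshift]

section LevyKernel

variable {ν : Measure ℝ} [SFinite ν] {u v : ℝ → ℝ} {M : ℝ} {C : ℝ≥0∞}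

theorem integrable_mul_sub_comp_add (hu : Measurable u) (hM : ∀ x, ‖u x‖ ≤ M)
    (hv : Measurable v) (hν : ∀ᵐ y ∂ν, 0 ≤ y) (hw : ∫⁻ y, ENNReal.ofReal (min 1 y) ∂ν ≠ ⊤)
    (hC : C ≠ ⊤)
    (hshift : ∀ y, 0 ≤ y → ∫⁻ x, ‖v (x + y) - v x‖ₑ ≤ C * ENNReal.ofReal (min 1 y)) :
    Integrable (uncurry fun x y => u x * (v x - v (x + y))) (volume.prod ν) := by
  refine integrable_prod_of_lintegral_enorm_le (C := ENNReal.ofReal M * C) (by fun_prop) hw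
    (ENNReal.mul_ne_top ENNReal.ofReal_ne_top hC) (hν.mono fun y hy => ?_)
  calc ∫⁻ x, ‖u x * (v x - v (x + y))‖ₑ
      ≤ ∫⁻ x, ENNReal.ofReal M * ‖v (x + y) - v x‖ₑ := lintegral_mono fun x => by
        rw [enorm_mul, enorm_sub_rev]
        exact mul_le_mul' (ofReal_norm (u x) ▸ ENNReal.ofReal_le_ofReal (hM x)) le_rfl
    _ = ENNReal.ofReal M * ∫⁻ x, ‖v (x + y) - v x‖ₑ :=
        lintegral_const_mul' _ _ ENNReal.ofReal_ne_top
    _ ≤ ENNReal.ofReal M * C * ENNReal.ofReal (min 1 y) := by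
        rw [mul_assoc]; exact mul_le_mul' le_rfl (hshift y hy)

theorem integrable_sub_comp_sub_mul (hu : Measurable u) (hv : Measurable v)
    (hM : ∀ x, ‖v x‖ ≤ M) (hν : ∀ᵐ y ∂ν, 0 ≤ y) (hw : ∫⁻ y, ENNReal.ofReal (min 1 y) ∂ν ≠ ⊤)
    (hC : C ≠ ⊤)
    (hshift : ∀ y, 0 ≤ y → ∫⁻ x, ‖u (x + y) - u x‖ₑ ≤ C * ENNReal.ofReal (min 1 y)) :
    Integrable (uncurry fun x y => (u x - u (x - y)) * v x) (volume.prod ν) := by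
  refine integrable_prod_of_lintegral_enorm_le (C := C * ENNReal.ofReal M) (by fun_prop) hw
    (ENNReal.mul_ne_top hC ENNReal.ofReal_ne_top) (hν.mono fun y hy => ?_)
  calc ∫⁻ x, ‖(u x - u (x - y)) * v x‖ₑ
      ≤ ∫⁻ x, ‖u (x - y + y) - u (x - y)‖ₑ * ENNReal.ofReal M := lintegral_mono fun x => by
        rw [enorm_mul, sub_add_cancel]
        exact mul_le_mul' le_rfl (ofReal_norm (v x) ▸ ENNReal.ofReal_le_ofReal (hM x))
    _ = (∫⁻ x, ‖u (x + y) - u x‖ₑ) * ENNReal.ofReal M := by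
        rw [lintegral_mul_const' _ _ ENNReal.ofReal_ne_top,
          lintegral_sub_right_eq_self (fun x => ‖u (x + y) - u x‖ₑ) y]
    _ ≤ C * ENNReal.ofReal M * ENNReal.ofReal (min 1 y) := by
        rw [mul_right_comm]; exact mul_le_mul' (hshift y hy) le_rfl

end LevyKernel

theorem marchaud_integration_by_parts_general
    (μ : Measure ℝ)
    (hμ : ∫⁻ y in Ioi (0:ℝ), ENNReal.ofReal (min 1 y) ∂μ < ⊤)
    (u v u' v' : ℝ → ℝ)
    (hu0 : ∀ x ≤ (0:ℝ), u x = 0) (hv0 : ∀ x ≤ (0:ℝ), v x = 0)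
    (huInt : IntegrableOn u (Ioi 0)) (hvInt : IntegrableOn v (Ioi 0))
    (hud : ∀ x ∈ Ioi (0:ℝ), HasDerivAt u (u' x) x)
    (hvd : ∀ x ∈ Ioi (0:ℝ), HasDerivAt v (v' x) x)
    (hu'Int : IntegrableOn u' (Ioi 0)) (hv'Int : IntegrableOn v' (Ioi 0)) :
    ∫ x in Ioi (0:ℝ), u x * (∫ y in Ioi (0:ℝ), (v x - v (x + y)) ∂μ)
      = ∫ x in Ioi (0:ℝ), (∫ y in Ioi (0:ℝ), (u x - u (x - y)) ∂μ) * v x := by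
  have hum := measurable_of_hasDerivAt_Ioi hu0 hud
  have hvm := measurable_of_hasDerivAt_Ioi hv0 hvd
  obtain ⟨Mu, hMu⟩ := exists_norm_le_of_hasDerivAt_Ioi hu0 hud hu'Int
  obtain ⟨Mv, hMv⟩ := exists_norm_le_of_hasDerivAt_Ioi hv0 hvd hv'Int
  obtain ⟨Cu, hCu, hu_shift⟩ :=
    exists_lintegral_enorm_comp_add_sub_le_mul_min hu0 hud hu'Int huInt
  obtain ⟨Cv, hCv, hv_shift⟩ :=
    exists_lintegral_enorm_comp_add_sub_le_mul_min hv0 hvd hv'Int hvInt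
  have hpos : ∀ᵐ y ∂μ.restrict (Ioi 0), 0 < y := ae_restrict_mem measurableSet_Ioi
  have : SigmaFinite (μ.restrict (Ioi 0)) := sigmaFinite_of_lintegral_ne_top (by fun_prop)
    (hpos.mono fun y hy => by positivity) hμ.ne
  have hnonneg := hpos.mono fun _ hy => hy.le
  rw [setIntegral_eq_integral_of_forall_compl_eq_zero fun x hx => by
      rw [hu0 x (not_lt.1 hx), zero_mul],
    setIntegral_eq_integral_of_forall_compl_eq_zero fun x hx => by
      rw [hv0 x (not_lt.1 hx), mul_zero]]
  simp_rw [← integral_const_mul, ← integral_mul_const]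
  rw [integral_integral_swap
      (integrable_mul_sub_comp_add hum hMu hvm hnonneg hμ.ne hCv hv_shift),
    integral_integral_swap
      (integrable_sub_comp_sub_mul hum hvm hMv hnonneg hμ.ne hCu hu_shift)]
  exact integral_congr_ae (ae_of_all _ fun y => integral_mul_sub_comp_add_eq
    hum.aestronglyMeasurable hMu (integrable_of_integrableOn_Ioi hv0 hvInt) y)

/-- Integration by parts for the left and right Marchaud-type derivatives
associated with a Lévy measure `μ` on `(0,∞)`, for `u, v ∈ W^{1,1}_0(0,∞)`
extended by zero on `(-∞,0]`. -/
theorem marchaud_integration_by_parts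
    (μ : Measure ℝ)
    (hμ : ∫⁻ y in Ioi (0:ℝ), ENNReal.ofReal (min 1 y) ∂μ < ⊤)
    (u v u' v' : ℝ → ℝ)
    (hu0 : ∀ x ≤ (0:ℝ), u x = 0) (hv0 : ∀ x ≤ (0:ℝ), v x = 0)
    (huInt : IntegrableOn u (Ioi 0)) (hvInt : IntegrableOn v (Ioi 0))
    (hud : ∀ x ∈ Ioi (0:ℝ), HasDerivAt u (u' x) x)
    (hvd : ∀ x ∈ Ioi (0:ℝ), HasDerivAt v (v' x) x)
    (hu'Int : IntegrableOn u' (Ioi 0)) (hv'Int : IntegrableOn v' (Ioi 0))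
    (hDv : IntegrableOn (fun x => ∫ y in Ioi (0:ℝ), (v x - v (x + y)) ∂μ) (Ioi 0))
    (hDu : IntegrableOn (fun x => ∫ y in Ioi (0:ℝ), (u x - u (x - y)) ∂μ) (Ioi 0)) :
    ∫ x in Ioi (0:ℝ), u x * (∫ y in Ioi (0:ℝ), (v x - v (x + y)) ∂μ)
      = ∫ x in Ioi (0:ℝ), (∫ y in Ioi (0:ℝ), (u x - u (x - y)) ∂μ) * v x :=
  marchaud_integration_by_parts_general μ hμ u v u' v' hu0 hv0 huInt hvInt hud hvd hu'Int hv'Int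
end

section
/- Fix x ∈ ℝ and let u : ℝ → ℝ be locally absolutely continuous on [x,∞) with derivative u′ satisfying ∫_0^∞ |u′(x+y)| μ̄(y) dy < ∞, where μ̄(z) = μ((z,∞)). Then the left Marchaud-type derivative coincides with the Caputo-type (Riemann–Liouville-type) expression: D⁻_μ u(x) = −∫_0^∞ u′(x+y) μ̄(y) dy, i.e. ∫_0^∞ (u(x) − u(x+z)) dμ(z) = −∫_x^∞ u′(y) μ̄(y−x) dy. -/
/-!
Write `u x - u (x + z) = -∫_0^z u' (x + y) dy` and integrate the kernel `𝟙{0 < y < z} u' (x + y)`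
against `dy ⊗ μ(dz)` on `(0, ∞)²`: integrating out `y` first gives the Marchaud side, integrating
out `z` first gives `u' (x + y) μ((y, ∞))`, i.e. the Caputo side. The hypothesis on `u'` is exactly
absolute integrability of this kernel, which justifies Fubini and also gives the integrability
of `u'` on `(x, x + z)` for `μ`-a.e. `z` that the fundamental theorem of calculus needs. The Lévy
condition on `μ` makes its tails finite, so `μ` restricted to `(0, ∞)` is σ-finite.
-/

open MeasureTheory Real Set Filter Topology

open scoped ENNReal

theorem measure_Ioi_ne_top_of_lintegral_min_lt_top {μ : Measure ℝ}
    (hμ : ∫⁻ y in Ioi (0:ℝ), ENNReal.ofReal (min 1 y) ∂μ < ⊤) {y : ℝ} (hy : 0 < y) :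
    μ (Ioi y) ≠ ∞ := by
  have hbound : ENNReal.ofReal (min 1 y) * μ (Ioi y) < ∞ :=
    calc ENNReal.ofReal (min 1 y) * μ (Ioi y)
        = ∫⁻ _ in Ioi y, ENNReal.ofReal (min 1 y) ∂μ := (setLIntegral_const _ _).symm
      _ ≤ ∫⁻ z in Ioi y, ENNReal.ofReal (min 1 z) ∂μ :=
          setLIntegral_mono (by fun_prop) fun z hz =>
            ENNReal.ofReal_le_ofReal (min_le_min le_rfl (le_of_lt hz))
      _ ≤ ∫⁻ z in Ioi (0:ℝ), ENNReal.ofReal (min 1 z) ∂μ :=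
          lintegral_mono_set (Ioi_subset_Ioi hy.le)
      _ < ∞ := hμ
  exact (ENNReal.lt_top_of_mul_ne_top_right hbound.ne (by simp [hy])).ne

theorem sigmaFinite_restrict_Ioi_of_measure_Ioi_ne_top {μ : Measure ℝ}
    (hfin : ∀ y, 0 < y → μ (Ioi y) ≠ ∞) : SigmaFinite (μ.restrict (Ioi 0)) := by
  refine Measure.sigmaFinite_of_countable
    (S := insert (Iic 0) (range fun n : ℕ => Ioi (1 / (n + 1 : ℝ))))
    ((countable_range _).insert _) ?_ ?_
  · rintro s (rfl | ⟨n, rfl⟩)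
    · simp [Measure.restrict_apply' measurableSet_Ioi, (Iic_disjoint_Ioi le_rfl).inter_eq]
    · exact (Measure.restrict_apply_le _ _).trans_lt (hfin _ (by positivity)).lt_top
  · refine eq_univ_of_forall fun r => ?_
    rcases le_or_gt r 0 with hr | hr
    · exact ⟨Iic 0, mem_insert _ _, hr⟩
    · obtain ⟨n, hn⟩ := exists_nat_one_div_lt hr
      exact ⟨_, mem_insert_of_mem _ ⟨n, rfl⟩, hn⟩

theorem integral_Ioo_eq_sub_of_hasDerivAt {f f' : ℝ → ℝ} {a b : ℝ} (hab : a ≤ b)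
    (hderiv : ∀ t ∈ Icc a b, HasDerivAt f (f' t) t) (hint : IntegrableOn f' (Ioo a b)) :
    ∫ t in Ioo a b, f' t = f b - f a := by
  rw [← integral_Ioc_eq_integral_Ioo, ← intervalIntegral.integral_of_le hab]
  exact intervalIntegral.integral_eq_sub_of_hasDerivAt (by rwa [uIcc_of_le hab])
    ((intervalIntegrable_iff_integrableOn_Ioo_of_le hab).2 hint)

theorem setIntegral_Ioi_comp_const_add {E : Type*} [NormedAddCommGroup E] [NormedSpace ℝ E]
    (f : ℝ → E) (x : ℝ) : ∫ y in Ioi 0, f (x + y) = ∫ y in Ioi x, f y := by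
  have := (measurePreserving_add_left volume x).setIntegral_preimage_emb
    (measurableEmbedding_addLeft x) f (Ioi x)
  simpa using this

/-- `(y, z) ↦ 𝟙{0 < y < z} g y`, written with the extension of `g` by zero so that measurability
of `g` on `(0, ∞)` suffices. -/
noncomputable def triangleKernel (g : ℝ → ℝ) (p : ℝ × ℝ) : ℝ :=
  {p : ℝ × ℝ | p.1 < p.2}.indicator (fun p => (Ioi 0).indicator g p.1) p

theorem triangleKernel_section_left (g : ℝ → ℝ) (z : ℝ) :
    (fun y => triangleKernel g (y, z)) = (Ioo 0 z).indicator g := by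
  ext y
  simp only [triangleKernel, indicator, mem_ofPred_eq, mem_Ioi, mem_Ioo]
  split_ifs <;> grind

theorem triangleKernel_section_right (g : ℝ → ℝ) (y : ℝ) :
    (fun z => triangleKernel g (y, z)) = (Ioi y).indicator fun _ => (Ioi 0).indicator g y := by
  ext z
  simp only [triangleKernel, indicator, mem_ofPred_eq, mem_Ioi]

theorem norm_triangleKernel (g : ℝ → ℝ) (p : ℝ × ℝ) :
    ‖triangleKernel g p‖ = triangleKernel (fun y => |g y|) p := by
  simp only [triangleKernel, norm_indicator_eq_indicator_norm, Real.norm_eq_abs]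

theorem integral_triangleKernel_section_right (μ : Measure ℝ) (g : ℝ → ℝ) (y : ℝ) :
    ∫ z, triangleKernel g (y, z) ∂μ.restrict (Ioi 0)
      = (Ioi 0).indicator (fun y => g y * (μ (Ioi y)).toReal) y := by
  rw [triangleKernel_section_right, integral_indicator_const _ measurableSet_Ioi, smul_eq_mul]
  rcases le_or_gt y 0 with hy | hy
  · simp [indicator_of_notMem (notMem_Ioi.2 hy)]
  · rw [indicator_of_mem (mem_Ioi.2 hy), indicator_of_mem (mem_Ioi.2 hy), mul_comm,
      measureReal_def, Measure.restrict_apply' measurableSet_Ioi,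
      inter_eq_left.2 (Ioi_subset_Ioi hy.le)]

theorem aestronglyMeasurable_triangleKernel {g : ℝ → ℝ}
    (hg : AEStronglyMeasurable g (volume.restrict (Ioi 0))) (ν : Measure ℝ) [SFinite ν] :
    AEStronglyMeasurable (triangleKernel g) (volume.prod ν) :=
  ((aestronglyMeasurable_indicator_iff measurableSet_Ioi).2 hg).comp_fst.indicator
    (measurableSet_lt measurable_fst measurable_snd)

theorem integrable_triangleKernel {μ : Measure ℝ} [SigmaFinite (μ.restrict (Ioi 0))]
    (hfin : ∀ y, 0 < y → μ (Ioi y) ≠ ∞) {g : ℝ → ℝ}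
    (hg : AEStronglyMeasurable g (volume.restrict (Ioi 0)))
    (hint : IntegrableOn (fun y => |g y| * (μ (Ioi y)).toReal) (Ioi 0)) :
    Integrable (triangleKernel g) (volume.prod (μ.restrict (Ioi 0))) := by
  refine (integrable_prod_iff (aestronglyMeasurable_triangleKernel hg _)).2
    ⟨ae_of_all _ fun y => ?_, ?_⟩
  · rw [triangleKernel_section_right, integrable_indicator_iff measurableSet_Ioi,
      integrableOn_const_iff]
    rcases le_or_gt y 0 with hy | hy
    · simp [indicator_of_notMem (notMem_Ioi.2 hy)]
    · exact Or.inr ((Measure.restrict_apply_le _ _).trans_lt (hfin y hy).lt_top)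
  · simp_rw [norm_triangleKernel, integral_triangleKernel_section_right]
    exact (integrable_indicator_iff measurableSet_Ioi).2 hint

theorem ae_integrableOn_Ioo_of_integrable_triangleKernel {ν : Measure ℝ} [SFinite ν] {g : ℝ → ℝ}
    (hK : Integrable (triangleKernel g) (volume.prod ν)) :
    ∀ᵐ z ∂ν, IntegrableOn g (Ioo 0 z) := by
  filter_upwards [hK.prod_left_ae] with z hz
  rwa [triangleKernel_section_left, integrable_indicator_iff measurableSet_Ioo] at hz

theorem setIntegral_integral_Ioo_eq_setIntegral_mul_measure_Ioi {μ : Measure ℝ}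
    [SigmaFinite (μ.restrict (Ioi 0))] {g : ℝ → ℝ}
    (hK : Integrable (triangleKernel g) (volume.prod (μ.restrict (Ioi 0)))) :
    ∫ z in Ioi 0, (∫ y in Ioo 0 z, g y) ∂μ = ∫ y in Ioi 0, g y * (μ (Ioi y)).toReal := by
  calc ∫ z in Ioi 0, (∫ y in Ioo 0 z, g y) ∂μ
      = ∫ z, (∫ y, triangleKernel g (y, z)) ∂μ.restrict (Ioi 0) := by
        simp_rw [triangleKernel_section_left, integral_indicator measurableSet_Ioo]
    _ = ∫ y, (∫ z, triangleKernel g (y, z) ∂μ.restrict (Ioi 0)) :=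
        (integral_integral_swap (f := fun y z => triangleKernel g (y, z)) hK).symm
    _ = ∫ y in Ioi 0, g y * (μ (Ioi y)).toReal := by
        simp_rw [integral_triangleKernel_section_right, integral_indicator measurableSet_Ioi]

/-- For `u` locally absolutely continuous on `[x,∞)` (here: differentiable with
derivative `u'`) with `∫_0^∞ |u'(x+y)| μ̄(y) dy < ∞`, where `μ̄(z) = μ((z,∞))`,
the left Marchaud-type derivative coincides with the Caputo-type expression:
`∫_0^∞ (u(x) − u(x+z)) dμ(z) = −∫_0^∞ u'(x+y) μ̄(y) dy = −∫_x^∞ u'(y) μ̄(y−x) dy`. -/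
theorem marchaud_eq_caputo_type
    (μ : Measure ℝ)
    (hμ : ∫⁻ y in Ioi (0:ℝ), ENNReal.ofReal (min 1 y) ∂μ < ⊤)
    (u u' : ℝ → ℝ) (x : ℝ)
    (hud : ∀ y ∈ Ici x, HasDerivAt u (u' y) y)
    (hint : IntegrableOn (fun y => |u' (x + y)| * (μ (Ioi y)).toReal) (Ioi 0)) :
    ∫ z in Ioi (0:ℝ), (u x - u (x + z)) ∂μ
        = -∫ y in Ioi (0:ℝ), u' (x + y) * (μ (Ioi y)).toReal ∧
    ∫ z in Ioi (0:ℝ), (u x - u (x + z)) ∂μ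
        = -∫ y in Ioi x, u' y * (μ (Ioi (y - x))).toReal := by
  have hfin : ∀ y, 0 < y → μ (Ioi y) ≠ ∞ := fun y hy =>
    measure_Ioi_ne_top_of_lintegral_min_lt_top hμ hy
  have := sigmaFinite_restrict_Ioi_of_measure_Ioi_ne_top hfin
  have hderiv : ∀ y, 0 ≤ y → HasDerivAt (fun t => u (x + t)) (u' (x + y)) y := fun y hy =>
    (hud (x + y) (by simpa using hy)).comp_const_add x y
  have hmeas : AEStronglyMeasurable (fun y => u' (x + y)) (volume.restrict (Ioi 0)) :=
    (measurable_deriv fun t => u (x + t)).aestronglyMeasurable.congr <|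
      ae_restrict_of_forall_mem measurableSet_Ioi fun y hy => (hderiv y (le_of_lt hy)).deriv
  have hK := integrable_triangleKernel hfin hmeas hint
  have hftc : ∀ᵐ z ∂μ.restrict (Ioi 0), u x - u (x + z) = -∫ y in Ioo 0 z, u' (x + y) := by
    filter_upwards [ae_integrableOn_Ioo_of_integrable_triangleKernel hK,
      ae_restrict_mem measurableSet_Ioi] with z hI hz
    rw [integral_Ioo_eq_sub_of_hasDerivAt (le_of_lt hz) (fun y hy => hderiv y hy.1) hI, add_zero]
    ring
  have hmain : ∫ z in Ioi (0:ℝ), (u x - u (x + z)) ∂μ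
      = -∫ y in Ioi (0:ℝ), u' (x + y) * (μ (Ioi y)).toReal := by
    rw [integral_congr_ae hftc, integral_neg,
      setIntegral_integral_Ioo_eq_setIntegral_mul_measure_Ioi hK]
  refine ⟨hmain, ?_⟩
  rw [hmain, ← setIntegral_Ioi_comp_const_add _ x]
  simp only [add_sub_cancel_left]
end

section
/- Let λ > 0 and let u : ℝ → ℝ be measurable, vanish on (-∞,0], and satisfy ∫_0^∞ e^{-λx}|u(x)| dx < ∞. Assume the map (x,y) ↦ e^{-λx}(u(x) − u(x−y)) is integrable on (0,∞)×(0,∞) with respect to dx⊗dμ(y). Then the Laplace transform of the right Marchaud-type derivative satisfies ∫_0^∞ e^{-λx} D⁺_μ u(x) dx = Φ(λ) ∫_0^∞ e^{-λx} u(x) dx, where Φ(λ) = ∫_0^∞ (1 − e^{-λy}) dμ(y). -/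
open MeasureTheory Real Set Filter Topology

/-- Laplace transform of the right Marchaud-type derivative:
`∫_0^∞ e^{-λx} D⁺_μ u(x) dx = Φ(λ) ∫_0^∞ e^{-λx} u(x) dx`, where
`Φ(λ) = ∫_0^∞ (1 − e^{-λy}) dμ(y)`, for `u` measurable vanishing on `(-∞,0]`. -/
theorem laplace_marchaud_right
    (μ : Measure ℝ)
    (hμ : ∫⁻ y in Ioi (0:ℝ), ENNReal.ofReal (min 1 y) ∂μ < ⊤)
    (l : ℝ) (hl : 0 < l)
    (u : ℝ → ℝ) (hmeas : Measurable u)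
    (hu0 : ∀ x ≤ (0:ℝ), u x = 0)
    (huint : IntegrableOn (fun x => Real.exp (-l * x) * |u x|) (Ioi 0))
    (hprod : Integrable
      (fun p : ℝ × ℝ => Real.exp (-l * p.1) * (u p.1 - u (p.1 - p.2)))
      ((volume.restrict (Ioi 0)).prod (μ.restrict (Ioi 0)))) :
    ∫ x in Ioi (0:ℝ), Real.exp (-l * x) * (∫ y in Ioi (0:ℝ), (u x - u (x - y)) ∂μ)
      = (∫ y in Ioi (0:ℝ), (1 - Real.exp (-l * y)) ∂μ)
          * ∫ x in Ioi (0:ℝ), Real.exp (-l * x) * u x := by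
  set L : ℝ := ∫ x in Ioi (0:ℝ), Real.exp (-l * x) * u x with hLdef
  -- finiteness of μ on Ioi c for c > 0
  have hfin : ∀ c : ℝ, 0 < c → μ (Ioi c) < ⊤ := by
    intro c hc
    have hkey : ENNReal.ofReal (min 1 c) * μ (Ioi c)
        ≤ ∫⁻ y in Ioi (0:ℝ), ENNReal.ofReal (min 1 y) ∂μ := by
      calc ENNReal.ofReal (min 1 c) * μ (Ioi c)
          = ∫⁻ _ in Ioi c, ENNReal.ofReal (min 1 c) ∂μ := by
            rw [setLIntegral_const]
        _ ≤ ∫⁻ y in Ioi c, ENNReal.ofReal (min 1 y) ∂μ := by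
            refine setLIntegral_mono' measurableSet_Ioi fun y hy => ?_
            exact ENNReal.ofReal_le_ofReal (min_le_min le_rfl (le_of_lt hy))
        _ ≤ ∫⁻ y in Ioi (0:ℝ), ENNReal.ofReal (min 1 y) ∂μ :=
            lintegral_mono_set (Ioi_subset_Ioi hc.le)
    by_contra hcon
    push_neg at hcon
    have h0 : ENNReal.ofReal (min 1 c) ≠ 0 := by
      simp only [ne_eq, ENNReal.ofReal_eq_zero, not_le]
      exact lt_min one_pos hc
    rw [top_le_iff.mp hcon, ENNReal.mul_top h0] at hkey
    exact hμ.ne (top_le_iff.mp hkey)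
  haveI : SigmaFinite (μ.restrict (Ioi (0:ℝ))) := by
    refine Measure.sigmaFinite_of_countable
      (S := range (fun n : ℕ => Ioi ((n:ℝ)+1)⁻¹ ∪ Iic 0)) (countable_range _) ?_ ?_
    · rintro s ⟨n, rfl⟩
      have h1 : (μ.restrict (Ioi (0:ℝ))) (Ioi ((n:ℝ)+1)⁻¹ ∪ Iic 0)
          ≤ μ (Ioi ((n:ℝ)+1)⁻¹) + 0 := by
        refine le_trans (measure_union_le _ _) (add_le_add ?_ ?_)
        · rw [Measure.restrict_apply measurableSet_Ioi]
          exact measure_mono inter_subset_left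
        · rw [Measure.restrict_apply measurableSet_Iic]
          have : Iic (0:ℝ) ∩ Ioi 0 = ∅ := by
            ext x; simp only [mem_inter_iff, mem_Iic, mem_Ioi, mem_empty_iff_false,
              iff_false, not_and, not_lt]
            exact fun h => h
          rw [this]; simp
      refine lt_of_le_of_lt h1 ?_
      rw [add_zero]
      exact hfin _ (by positivity)
    · rw [sUnion_range]
      ext x
      simp only [mem_iUnion, mem_univ, iff_true, mem_union, mem_Ioi, mem_Iic]
      rcases le_or_gt x 0 with hx | hx
      · exact ⟨0, Or.inr hx⟩
      · obtain ⟨n, hn⟩ := exists_nat_gt x⁻¹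
        refine ⟨n, Or.inl ?_⟩
        have hn1 : x⁻¹ < (n:ℝ) + 1 := hn.trans (by linarith)
        calc ((n:ℝ)+1)⁻¹ < (x⁻¹)⁻¹ := by
              exact inv_strictAnti₀ (by positivity) hn1
          _ = x := inv_inv x
  -- integrability of x ↦ e^{-lx} u x on Ioi 0
  have hInt_a : IntegrableOn (fun x => Real.exp (-l * x) * u x) (Ioi 0) := by
    refine Integrable.mono' huint ?_ ?_
    · exact ((measurable_const.mul measurable_id).exp.mul hmeas).aestronglyMeasurable
    · filter_upwards with x
      rw [Real.norm_eq_abs, abs_mul, abs_of_pos (Real.exp_pos _)]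
  -- translation identity for y > 0
  have htrans : ∀ y : ℝ, 0 < y →
      ∫ x in Ioi (0:ℝ), Real.exp (-l * x) * u (x - y)
        = Real.exp (-l * y) * L := by
    intro y hy
    set F : ℝ → ℝ := fun z => Real.exp (-l * z) * u z with hF
    have h1 : ∀ x : ℝ, Real.exp (-l * x) * u (x - y)
        = Real.exp (-l * y) * F (x - y) := by
      intro x
      have hexp : Real.exp (-l * y) * Real.exp (-l * (x - y)) = Real.exp (-l * x) := by
        rw [← Real.exp_add]; congr 1; ring
      simp only [hF]
      rw [← hexp]; ring
    have hF0 : ∀ x : ℝ, x ∉ Ioi (0:ℝ) → F x = 0 := by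
      intro x hx
      simp only [mem_Ioi, not_lt] at hx
      simp [hF, hu0 x hx]
    have hFy0 : ∀ x : ℝ, x ∉ Ioi (0:ℝ) → F (x - y) = 0 := by
      intro x hx
      simp only [mem_Ioi, not_lt] at hx
      simp [hF, hu0 (x - y) (by linarith)]
    calc ∫ x in Ioi (0:ℝ), Real.exp (-l * x) * u (x - y)
        = ∫ x in Ioi (0:ℝ), Real.exp (-l * y) * F (x - y) := by
          exact integral_congr_ae (Filter.Eventually.of_forall fun x => h1 x)
      _ = Real.exp (-l * y) * ∫ x in Ioi (0:ℝ), F (x - y) :=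
          integral_const_mul _ _
      _ = Real.exp (-l * y) * ∫ x : ℝ, F (x - y) := by
          rw [setIntegral_eq_integral_of_forall_compl_eq_zero hFy0]
      _ = Real.exp (-l * y) * ∫ x : ℝ, F x := by
          rw [integral_sub_right_eq_self F y]
      _ = Real.exp (-l * y) * L := by
          rw [← setIntegral_eq_integral_of_forall_compl_eq_zero hF0]
  -- a.e. integrability in x for a.e. y
  have hae : ∀ᵐ y ∂(μ.restrict (Ioi (0:ℝ))),
      IntegrableOn (fun x => Real.exp (-l * x) * (u x - u (x - y))) (Ioi 0) := by
    have hswap := hprod.swap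
    have := hswap.prod_right_ae
    filter_upwards [this] with y hy
    exact hy
  -- inner integral identity
  have key : ∀ᵐ y ∂(μ.restrict (Ioi (0:ℝ))),
      (∫ x in Ioi (0:ℝ), Real.exp (-l * x) * (u x - u (x - y)))
        = (1 - Real.exp (-l * y)) * L := by
    filter_upwards [hae, ae_restrict_mem measurableSet_Ioi] with y hy hy0
    have hb : IntegrableOn (fun x => Real.exp (-l * x) * u (x - y)) (Ioi 0) := by
      have h2 := hInt_a.sub hy
      refine h2.congr (Filter.Eventually.of_forall fun x => ?_)
      simp only [Pi.sub_apply]; ring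
    calc ∫ x in Ioi (0:ℝ), Real.exp (-l * x) * (u x - u (x - y))
        = ∫ x in Ioi (0:ℝ),
            (Real.exp (-l * x) * u x - Real.exp (-l * x) * u (x - y)) := by
          exact integral_congr_ae (Filter.Eventually.of_forall fun x => by ring)
      _ = (∫ x in Ioi (0:ℝ), Real.exp (-l * x) * u x)
            - ∫ x in Ioi (0:ℝ), Real.exp (-l * x) * u (x - y) :=
          integral_sub hInt_a hb
      _ = L - Real.exp (-l * y) * L := by rw [htrans y hy0]
      _ = (1 - Real.exp (-l * y)) * L := by ring
  calc ∫ x in Ioi (0:ℝ), Real.exp (-l * x) * (∫ y in Ioi (0:ℝ), (u x - u (x - y)) ∂μ)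
      = ∫ x in Ioi (0:ℝ), ∫ y in Ioi (0:ℝ),
          Real.exp (-l * x) * (u x - u (x - y)) ∂μ := by
        refine integral_congr_ae (Filter.Eventually.of_forall fun x => ?_)
        exact (integral_const_mul _ _).symm
    _ = ∫ y in Ioi (0:ℝ), ∫ x in Ioi (0:ℝ),
          Real.exp (-l * x) * (u x - u (x - y)) ∂volume ∂μ := by
        exact integral_integral_swap hprod
    _ = ∫ y in Ioi (0:ℝ), (1 - Real.exp (-l * y)) * L ∂μ := integral_congr_ae key
    _ = (∫ y in Ioi (0:ℝ), (1 - Real.exp (-l * y)) ∂μ) * L := integral_mul_const L _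
end

section
/- Let w ≥ 0, M > 0, and let u : [0,∞) → ℝ be locally absolutely continuous with |u(t)| ≤ M e^{wt} and |u′(t)| ≤ M e^{wt} for almost every t. Then for every λ > max(w, 0), the Laplace transform of the Caputo–Dzherbashian-type derivative 𝔇_μ u(x) = ∫_0^x u′(y) μ̄(x−y) dy satisfies ∫_0^∞ e^{-λx} 𝔇_μ u(x) dx = Φ(λ) ũ(λ) − (Φ(λ)/λ) u(0), where ũ(λ) = ∫_0^∞ e^{-λx} u(x) dx and Φ(λ) = ∫_0^∞ (1 − e^{-λy}) dμ(y). -/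
open MeasureTheory Real Set Filter Topology
open scoped ENNReal NNReal

lemma tail_lt_top (μ : Measure ℝ)
    (hμ : ∫⁻ y in Ioi (0:ℝ), ENNReal.ofReal (min 1 y) ∂μ < ⊤)
    {z : ℝ} (hz : 0 < z) : μ (Ioi z) < ⊤ := by
  have hc : (0:ℝ) < min 1 z := lt_min one_pos hz
  have h1 : ENNReal.ofReal (min 1 z) * μ (Ioi z)
      ≤ ∫⁻ y in Ioi z, ENNReal.ofReal (min 1 y) ∂μ := by
    rw [← setLIntegral_const]
    refine setLIntegral_mono (measurable_id.ennreal_ofReal.comp (measurable_const.min measurable_id)) ?_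
    intro y hy
    exact ENNReal.ofReal_le_ofReal (min_le_min le_rfl (le_of_lt hy))
  have h2 : ∫⁻ y in Ioi z, ENNReal.ofReal (min 1 y) ∂μ
      ≤ ∫⁻ y in Ioi (0:ℝ), ENNReal.ofReal (min 1 y) ∂μ :=
    lintegral_mono_set (Ioi_subset_Ioi hz.le)
  have := lt_of_le_of_lt (h1.trans h2) hμ
  rw [ENNReal.mul_lt_top_iff] at this
  rcases this with ⟨_, h⟩ | h | h
  · exact h
  · rw [ENNReal.ofReal_eq_zero] at h
    exact absurd h (not_le.mpr hc)
  · simp [h]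

lemma sf_restrict (μ : Measure ℝ)
    (hμ : ∫⁻ y in Ioi (0:ℝ), ENNReal.ofReal (min 1 y) ∂μ < ⊤) :
    SigmaFinite (μ.restrict (Ioi (0:ℝ))) := by
  refine ⟨⟨⟨fun n => Iic 0 ∪ Ioi (1/(n+1)), fun _ => trivial, ?_, ?_⟩⟩⟩
  · intro n
    have h1 : (0:ℝ) < 1/(n+1) := by positivity
    have : (Iic (0:ℝ) ∪ Ioi (1/(n+1))) ∩ Ioi 0 ⊆ Ioi (1/(n+1)) := by
      rintro x ⟨hx1 | hx1, hx2⟩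
      · exact absurd (lt_of_le_of_lt (mem_Iic.mp hx1) (mem_Ioi.mp hx2)) (lt_irrefl _)
      · exact hx1
    rw [Measure.restrict_apply ((measurableSet_Iic).union measurableSet_Ioi)]
    exact lt_of_le_of_lt (measure_mono this) (tail_lt_top μ hμ h1)
  · rw [iUnion_eq_univ_iff]
    intro x
    rcases le_or_gt x 0 with h | h
    · exact ⟨0, Or.inl h⟩
    · obtain ⟨n, hn⟩ := exists_nat_one_div_lt h
      exact ⟨n, Or.inr hn⟩

lemma meas_tail (μ : Measure ℝ) : Measurable fun z : ℝ => μ (Ioi z) :=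
  Antitone.measurable fun _ _ hst => measure_mono (Ioi_subset_Ioi hst)

lemma lshift (φ : ℝ → ℝ≥0∞) (hφ : Measurable φ) (y : ℝ) :
    ∫⁻ x in Ioi y, φ (x - y) = ∫⁻ z in Ioi (0:ℝ), φ z := by
  have hmap : Measure.map (· + y) (volume : Measure ℝ) = volume :=
    map_add_right_eq_self volume y
  have h := setLIntegral_map (μ := (volume : Measure ℝ)) (s := Ioi y)
    (f := fun x => φ (x - y)) (g := fun x => x + y)
    measurableSet_Ioi (hφ.comp (measurable_id.sub measurable_const))
    (measurable_id.add_const y)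
  rw [hmap] at h
  have hpre : (· + y) ⁻¹' Ioi y = Ioi (0:ℝ) := by
    ext x; simp [mem_Ioi]
  rw [hpre] at h
  simpa using h

lemma rshift (ψ : ℝ → ℝ) (y : ℝ) :
    ∫ x in Ioi y, ψ (x - y) = ∫ z in Ioi (0:ℝ), ψ z := by
  have hmap : Measure.map (· + y) (volume : Measure ℝ) = volume :=
    map_add_right_eq_self volume y
  have hemb : MeasurableEmbedding (· + y : ℝ → ℝ) :=
    (Homeomorph.addRight y).isClosedEmbedding.measurableEmbedding
  have h := hemb.setIntegral_map (μ := (volume : Measure ℝ)) (fun x => ψ (x - y)) (Ioi y)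
  rw [hmap] at h
  have hpre : (· + y) ⁻¹' Ioi y = Ioi (0:ℝ) := by
    ext x; simp [mem_Ioi]
  rw [hpre] at h
  simpa using h

lemma ishift (ψ : ℝ → ℝ) (y : ℝ) (h : IntegrableOn ψ (Ioi (0:ℝ))) :
    IntegrableOn (fun x => ψ (x - y)) (Ioi y) := by
  have hmap : Measure.map (· + y) (volume : Measure ℝ) = volume :=
    map_add_right_eq_self volume y
  have hemb : MeasurableEmbedding (· + y : ℝ → ℝ) :=
    (Homeomorph.addRight y).isClosedEmbedding.measurableEmbedding
  have hpre : (· + y) ⁻¹' Ioi y = Ioi (0:ℝ) := by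
    ext x; simp [mem_Ioi]
  have : volume.restrict (Ioi y) = Measure.map (· + y) (volume.restrict (Ioi 0)) := by
    rw [← hpre, ← Measure.restrict_map (measurable_add_const y) measurableSet_Ioi, hmap]
  rw [IntegrableOn, this, hemb.integrable_map_iff]
  have hc : ((fun x => ψ (x - y)) ∘ fun x => x + y) = ψ := by
    funext x; simp
  rwa [hc]

lemma exp_ii (l a b : ℝ) (hl : 0 < l) :
    ∫ z in a..b, Real.exp (-l*z) = (Real.exp (-l*a) - Real.exp (-l*b))/l := by
  have : ∀ z ∈ uIcc a b, HasDerivAt (fun t => -Real.exp (-l*t)/l) (Real.exp (-l*z)) z := by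
    intro z _
    have h1 : HasDerivAt (fun t : ℝ => -l*t) (-l) z := by
      simpa using (hasDerivAt_id z).const_mul (-l)
    have h2 := (Real.hasDerivAt_exp (-l*z)).comp z h1
    have h3 := ((h2.neg).div_const l)
    exact h3.congr_deriv (by rw [div_eq_iff hl.ne']; ring)
  rw [intervalIntegral.integral_eq_sub_of_hasDerivAt this
    (Continuous.intervalIntegrable (by continuity) a b)]
  field_simp
  ring

lemma one_sub_exp_le (l y : ℝ) (hl : 0 < l) (hy : 0 < y) :
    1 - Real.exp (-l*y) ≤ max 1 l * min 1 y := by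
  have h1 : 1 - Real.exp (-l*y) ≤ 1 := by
    have := Real.exp_pos (-l*y); linarith
  have h2 : 1 - Real.exp (-l*y) ≤ l*y := by
    have := Real.add_one_le_exp (-l*y)
    linarith
  rcases le_total y 1 with h | h
  · rw [min_eq_right h]
    calc 1 - Real.exp (-l*y) ≤ l*y := h2
    _ ≤ max 1 l * y := by nlinarith [le_max_right 1 l]
  · rw [min_eq_left h]
    calc 1 - Real.exp (-l*y) ≤ 1 := h1
    _ ≤ max 1 l * 1 := by nlinarith [le_max_left 1 l]

lemma exp_Ioo (l y : ℝ) (hl : 0 < l) :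
    ∫⁻ z in Ioo (0:ℝ) y, ENNReal.ofReal (Real.exp (-l*z))
      = ENNReal.ofReal ((1 - Real.exp (-l*y))/l) := by
  rcases le_or_gt y 0 with h | h
  · rw [Ioo_eq_empty (by linarith), Measure.restrict_empty, lintegral_zero_measure, eq_comm,
      ENNReal.ofReal_eq_zero]
    have h1 : (1:ℝ) ≤ Real.exp (-l*y) := by
      rw [← Real.exp_zero]
      apply Real.exp_le_exp.mpr
      nlinarith
    exact div_nonpos_of_nonpos_of_nonneg (by linarith) hl.le
  · have hint : IntegrableOn (fun z => Real.exp (-l*z)) (Ioo (0:ℝ) y) :=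
      ((Continuous.integrableOn_Icc (by continuity))).mono_set Ioo_subset_Icc_self
    have hnn : 0 ≤ᵐ[volume.restrict (Ioo (0:ℝ) y)] fun z => Real.exp (-l*z) :=
      ae_of_all _ fun z => (Real.exp_pos _).le
    rw [← ofReal_integral_eq_lintegral_ofReal hint hnn]
    congr 1
    rw [← integral_Ioc_eq_integral_Ioo, ← intervalIntegral.integral_of_le h.le, exp_ii l 0 y hl]
    simp

lemma tail_lap (μ : Measure ℝ)
    (hμ : ∫⁻ y in Ioi (0:ℝ), ENNReal.ofReal (min 1 y) ∂μ < ⊤)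
    {l : ℝ} (hl : 0 < l) :
    ∫⁻ z in Ioi (0:ℝ), ENNReal.ofReal (Real.exp (-l*z)) * μ (Ioi z)
      = ∫⁻ y in Ioi (0:ℝ), ENNReal.ofReal ((1 - Real.exp (-l*y))/l) ∂μ := by
  haveI := sf_restrict μ hμ
  set ν := μ.restrict (Ioi (0:ℝ)) with hν
  set f : ℝ → ℝ → ℝ≥0∞ := fun z y => if z < y then ENNReal.ofReal (Real.exp (-l*z)) else 0
    with hf
  have hmeas : Measurable (Function.uncurry f) := by
    apply Measurable.ite (measurableSet_lt measurable_fst measurable_snd)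
    · exact (Real.measurable_exp.comp (measurable_fst.const_mul (-l))).ennreal_ofReal
    · exact measurable_const
  have step1 : ∫⁻ z in Ioi (0:ℝ), ENNReal.ofReal (Real.exp (-l*z)) * μ (Ioi z)
      = ∫⁻ z in Ioi (0:ℝ), ∫⁻ y, f z y ∂ν := by
    refine setLIntegral_congr_fun measurableSet_Ioi (fun z hz => ?_)
    have h1 : μ (Ioi z) = ν (Ioi z) := by
      rw [hν, Measure.restrict_apply measurableSet_Ioi,
        inter_eq_left.mpr (Ioi_subset_Ioi (le_of_lt hz))]
    have h2 : ∀ y, f z y = (Ioi z).indicator (fun _ => ENNReal.ofReal (Real.exp (-l*z))) y := by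
      intro y; simp only [hf, Set.indicator_apply, mem_Ioi]
    simp only [h2]
    rw [lintegral_indicator measurableSet_Ioi, setLIntegral_const, h1]
  have step2 : ∫⁻ z in Ioi (0:ℝ), ∫⁻ y, f z y ∂ν
      = ∫⁻ y, (∫⁻ z in Ioi (0:ℝ), f z y) ∂ν := by
    exact lintegral_lintegral_swap (μ := volume.restrict (Ioi (0:ℝ))) (ν := ν)
      hmeas.aemeasurable
  have step3 : ∫⁻ y, (∫⁻ z in Ioi (0:ℝ), f z y) ∂ν
      = ∫⁻ y, ENNReal.ofReal ((1 - Real.exp (-l*y))/l) ∂ν := by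
    refine lintegral_congr_ae ?_
    filter_upwards [ae_restrict_mem measurableSet_Ioi] with y hy
    have h2 : ∀ z, f z y = (Iio y).indicator (fun z => ENNReal.ofReal (Real.exp (-l*z))) z := by
      intro z; simp only [hf, Set.indicator_apply, mem_Iio]
    simp only [h2]
    rw [lintegral_indicator measurableSet_Iio, Measure.restrict_restrict measurableSet_Iio]
    rw [show Iio y ∩ Ioi 0 = Ioo 0 y by ext t; simp [mem_Ioo, and_comm]]
    exact exp_Ioo l y hl
  rw [step1, step2, step3, hν]

lemma lint_phi_lt_top (μ : Measure ℝ)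
    (hμ : ∫⁻ y in Ioi (0:ℝ), ENNReal.ofReal (min 1 y) ∂μ < ⊤)
    {l : ℝ} (hl : 0 < l) :
    ∫⁻ y in Ioi (0:ℝ), ENNReal.ofReal (1 - Real.exp (-l*y)) ∂μ < ⊤ := by
  have h1 : ∫⁻ y in Ioi (0:ℝ), ENNReal.ofReal (1 - Real.exp (-l*y)) ∂μ
      ≤ ∫⁻ y in Ioi (0:ℝ), ENNReal.ofReal (max 1 l) * ENNReal.ofReal (min 1 y) ∂μ := by
    refine setLIntegral_mono' measurableSet_Ioi fun y hy => ?_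
    rw [← ENNReal.ofReal_mul (by positivity)]
    exact ENNReal.ofReal_le_ofReal (one_sub_exp_le l y hl hy)
  rw [lintegral_const_mul' _ _ ENNReal.ofReal_ne_top] at h1
  exact lt_of_le_of_lt h1 (ENNReal.mul_lt_top ENNReal.ofReal_lt_top hμ)

lemma phi_integrable (μ : Measure ℝ)
    (hμ : ∫⁻ y in Ioi (0:ℝ), ENNReal.ofReal (min 1 y) ∂μ < ⊤)
    {l : ℝ} (hl : 0 < l) :
    IntegrableOn (fun y => 1 - Real.exp (-l*y)) (Ioi (0:ℝ)) μ := by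
  constructor
  · exact (continuous_const.sub (Real.continuous_exp.comp
      (continuous_const.mul continuous_id))).aestronglyMeasurable
  · rw [hasFiniteIntegral_iff_ofReal]
    · exact lint_phi_lt_top μ hμ hl
    · filter_upwards [ae_restrict_mem measurableSet_Ioi] with y hy
      have : Real.exp (-l*y) ≤ 1 := by
        rw [← Real.exp_zero]; apply Real.exp_le_exp.mpr; nlinarith [mem_Ioi.mp hy]
      simp only [Pi.zero_apply]; linarith

lemma phi_eq (μ : Measure ℝ)
    (hμ : ∫⁻ y in Ioi (0:ℝ), ENNReal.ofReal (min 1 y) ∂μ < ⊤)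
    {l : ℝ} (hl : 0 < l) :
    ∫ y in Ioi (0:ℝ), (1 - Real.exp (-l*y)) ∂μ
      = (∫⁻ y in Ioi (0:ℝ), ENNReal.ofReal (1 - Real.exp (-l*y)) ∂μ).toReal := by
  apply integral_eq_lintegral_of_nonneg_ae
  · filter_upwards [ae_restrict_mem measurableSet_Ioi] with y hy
    have : Real.exp (-l*y) ≤ 1 := by
      rw [← Real.exp_zero]; apply Real.exp_le_exp.mpr; nlinarith [mem_Ioi.mp hy]
    simp only [Pi.zero_apply]; linarith
  · exact (continuous_const.sub (Real.continuous_exp.comp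
      (continuous_const.mul continuous_id))).aestronglyMeasurable

lemma klint_eq (μ : Measure ℝ)
    (hμ : ∫⁻ y in Ioi (0:ℝ), ENNReal.ofReal (min 1 y) ∂μ < ⊤) (l : ℝ) :
    ∫⁻ z in Ioi (0:ℝ), ENNReal.ofReal (Real.exp (-l*z) * (μ (Ioi z)).toReal)
      = ∫⁻ z in Ioi (0:ℝ), ENNReal.ofReal (Real.exp (-l*z)) * μ (Ioi z) := by
  refine setLIntegral_congr_fun measurableSet_Ioi (fun z hz => ?_)
  rw [ENNReal.ofReal_mul (Real.exp_pos _).le,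
    ENNReal.ofReal_toReal (tail_lt_top μ hμ hz).ne]

lemma ofReal_div_inv (a l : ℝ) (hl : 0 < l) :
    ENNReal.ofReal (a / l) = ENNReal.ofReal l⁻¹ * ENNReal.ofReal a := by
  rw [div_eq_inv_mul, ENNReal.ofReal_mul (by positivity)]

lemma c'_lt_top (μ : Measure ℝ)
    (hμ : ∫⁻ y in Ioi (0:ℝ), ENNReal.ofReal (min 1 y) ∂μ < ⊤)
    {l : ℝ} (hl : 0 < l) :
    ∫⁻ z in Ioi (0:ℝ), ENNReal.ofReal (Real.exp (-l*z)) * μ (Ioi z) < ⊤ := by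
  rw [tail_lap μ hμ hl]
  have : ∀ y : ℝ, ENNReal.ofReal ((1 - Real.exp (-l*y))/l)
      = ENNReal.ofReal l⁻¹ * ENNReal.ofReal (1 - Real.exp (-l*y)) := fun y =>
    ofReal_div_inv _ l hl
  simp only [this]
  rw [lintegral_const_mul' _ _ ENNReal.ofReal_ne_top]
  exact ENNReal.mul_lt_top ENNReal.ofReal_lt_top (lint_phi_lt_top μ hμ hl)

lemma k_integrable (μ : Measure ℝ)
    (hμ : ∫⁻ y in Ioi (0:ℝ), ENNReal.ofReal (min 1 y) ∂μ < ⊤)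
    {l : ℝ} (hl : 0 < l) :
    IntegrableOn (fun z => Real.exp (-l*z) * (μ (Ioi z)).toReal) (Ioi (0:ℝ)) := by
  constructor
  · exact ((Real.measurable_exp.comp (measurable_id.const_mul (-l))).mul
      (meas_tail μ).ennreal_toReal).aestronglyMeasurable
  · rw [hasFiniteIntegral_iff_ofReal]
    · rw [klint_eq μ hμ l]
      exact c'_lt_top μ hμ hl
    · exact ae_of_all _ fun z => mul_nonneg (Real.exp_pos _).le ENNReal.toReal_nonneg

lemma k_eq (μ : Measure ℝ)
    (hμ : ∫⁻ y in Ioi (0:ℝ), ENNReal.ofReal (min 1 y) ∂μ < ⊤)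
    {l : ℝ} (hl : 0 < l) :
    ∫ z in Ioi (0:ℝ), Real.exp (-l*z) * (μ (Ioi z)).toReal
      = (∫ y in Ioi (0:ℝ), (1 - Real.exp (-l*y)) ∂μ) / l := by
  have hmeas : AEStronglyMeasurable (fun z : ℝ => Real.exp (-l*z) * (μ (Ioi z)).toReal)
      (volume.restrict (Ioi (0:ℝ))) := by
    exact ((Real.measurable_exp.comp (measurable_id.const_mul (-l))).mul
      (meas_tail μ).ennreal_toReal).aestronglyMeasurable
  rw [integral_eq_lintegral_of_nonneg_ae
      (ae_of_all _ fun z => mul_nonneg (Real.exp_pos _).le ENNReal.toReal_nonneg)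
      hmeas,
    klint_eq μ hμ l, tail_lap μ hμ hl]
  have h2 : ∀ y : ℝ, ENNReal.ofReal ((1 - Real.exp (-l*y))/l)
      = ENNReal.ofReal l⁻¹ * ENNReal.ofReal (1 - Real.exp (-l*y)) := fun y =>
    ofReal_div_inv _ l hl
  simp only [h2]
  rw [lintegral_const_mul' _ _ ENNReal.ofReal_ne_top, ENNReal.toReal_mul,
    ENNReal.toReal_ofReal (by positivity), phi_eq μ hμ hl]
  rw [div_eq_inv_mul]

lemma exp_deriv_at (l y : ℝ) : HasDerivAt (fun t : ℝ => Real.exp (-l*t)) (-l * Real.exp (-l*y)) y := by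
  have h1 : HasDerivAt (fun t : ℝ => -l*t) (-l) y := by
    simpa using (hasDerivAt_id y).const_mul (-l)
  have h2 := (Real.hasDerivAt_exp (-l*y)).comp y h1
  have h3 : HasDerivAt (fun t : ℝ => Real.exp (-l*t)) (Real.exp (-l*y) * (-l)) y := h2
  convert h3 using 1
  ring

lemma exp_mul_tendsto_zero (w l M : ℝ) (hl : w < l) :
    Tendsto (fun T => M * Real.exp ((w-l)*T)) atTop (𝓝 0) := by
  have h1 : Tendsto (fun T : ℝ => (w-l)*T) atTop atBot :=
    (tendsto_const_mul_atBot_of_neg (by linarith)).mpr tendsto_id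
  have h2 : Tendsto (fun T : ℝ => Real.exp ((w-l)*T)) atTop (𝓝 0) :=
    Real.tendsto_exp_atBot.comp h1
  simpa using h2.const_mul M

lemma lap_deriv (w M : ℝ) (hw : 0 ≤ w) (hM : 0 < M)
    (u u' : ℝ → ℝ)
    (hud : ∀ t ∈ Ici (0:ℝ), HasDerivAt u (u' t) t)
    (hubd : ∀ t ∈ Ici (0:ℝ), |u t| ≤ M * Real.exp (w * t))
    (hu'bd : ∀ᵐ t ∂(volume.restrict (Ioi (0:ℝ))), |u' t| ≤ M * Real.exp (w * t))
    {l : ℝ} (hl : w < l) (hl0 : 0 < l) :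
    IntegrableOn (fun y => Real.exp (-l*y) * u' y) (Ioi (0:ℝ))
    ∧ IntegrableOn (fun x => Real.exp (-l*x) * u x) (Ioi (0:ℝ))
    ∧ ∫ y in Ioi (0:ℝ), Real.exp (-l*y) * u' y
      = l * (∫ x in Ioi (0:ℝ), Real.exp (-l*x) * u x) - u 0 := by
  have hcont : ContinuousOn u (Ici (0:ℝ)) :=
    fun t ht => (hud t ht).continuousAt.continuousWithinAt
  have hexp : IntegrableOn (fun t : ℝ => M * Real.exp ((w-l)*t)) (Ioi (0:ℝ)) := by
    have h := (exp_neg_integrableOn_Ioi (0:ℝ) (show (0:ℝ) < l - w by linarith)).const_mul M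
    have hfun : (fun x : ℝ => M * Real.exp (-(l - w) * x)) = fun t => M * Real.exp ((w-l)*t) := by
      funext x; ring_nf
    rwa [hfun] at h
  have hbd : ∀ T : ℝ, 0 ≤ T → ∀ x ∈ Ioi (0:ℝ),
      True := fun _ _ _ _ => trivial
  have int_u : IntegrableOn (fun x => Real.exp (-l*x) * u x) (Ioi (0:ℝ)) := by
    refine Integrable.mono' hexp ?_ ?_
    · exact (((Real.continuous_exp.comp (continuous_const.mul continuous_id)).continuousOn).mul
        (hcont.mono Ioi_subset_Ici_self)).aestronglyMeasurable measurableSet_Ioi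
    · filter_upwards [ae_restrict_mem measurableSet_Ioi] with x hx
      have h1 := hubd x (mem_Ici.mpr (le_of_lt hx))
      have h2 : |Real.exp (-l*x) * u x| = Real.exp (-l*x) * |u x| := by
        rw [abs_mul, abs_of_pos (Real.exp_pos _)]
      rw [Real.norm_eq_abs, h2]
      calc Real.exp (-l*x) * |u x| ≤ Real.exp (-l*x) * (M * Real.exp (w*x)) := by
            exact mul_le_mul_of_nonneg_left h1 (Real.exp_pos _).le
      _ = M * Real.exp ((w-l)*x) := by
            rw [show (w-l)*x = w*x + (-l*x) by ring, Real.exp_add]; ring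
  have hu'eq : ∀ t ∈ Ici (0:ℝ), deriv u t = u' t := fun t ht => (hud t ht).deriv
  have int_u' : IntegrableOn (fun y => Real.exp (-l*y) * u' y) (Ioi (0:ℝ)) := by
    refine Integrable.mono' hexp ?_ ?_
    · have hm : AEStronglyMeasurable (fun y : ℝ => Real.exp (-l*y) * deriv u y)
          (volume.restrict (Ioi (0:ℝ))) := by
        exact ((Real.measurable_exp.comp (measurable_id.const_mul (-l))).mul
          (measurable_deriv u)).aestronglyMeasurable
      refine AEStronglyMeasurable.congr hm ?_
      filter_upwards [ae_restrict_mem measurableSet_Ioi] with y hy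
      rw [hu'eq y (mem_Ici.mpr (le_of_lt hy))]
    · filter_upwards [ae_restrict_mem measurableSet_Ioi, hu'bd] with y hy h1
      have h2 : |Real.exp (-l*y) * u' y| = Real.exp (-l*y) * |u' y| := by
        rw [abs_mul, abs_of_pos (Real.exp_pos _)]
      rw [Real.norm_eq_abs, h2]
      calc Real.exp (-l*y) * |u' y| ≤ Real.exp (-l*y) * (M * Real.exp (w*y)) := by
            exact mul_le_mul_of_nonneg_left h1 (Real.exp_pos _).le
      _ = M * Real.exp ((w-l)*y) := by
            rw [show (w-l)*y = w*y + (-l*y) by ring, Real.exp_add]; ring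
  refine ⟨int_u', int_u, ?_⟩
  -- FTC on [0, T]
  have hftc : ∀ T : ℝ, 0 ≤ T → ∫ y in (0:ℝ)..T, Real.exp (-l*y) * u' y
      = Real.exp (-l*T) * u T - u 0 + l * ∫ y in (0:ℝ)..T, Real.exp (-l*y) * u y := by
    intro T hT
    have hiu : IntervalIntegrable (fun y => Real.exp (-l*y) * u y) volume 0 T := by
      rw [intervalIntegrable_iff_integrableOn_Ioc_of_le hT]
      exact int_u.mono_set Ioc_subset_Ioi_self
    have hiu' : IntervalIntegrable (fun y => Real.exp (-l*y) * u' y) volume 0 T := by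
      rw [intervalIntegrable_iff_integrableOn_Ioc_of_le hT]
      exact int_u'.mono_set Ioc_subset_Ioi_self
    have hderiv : ∀ y ∈ uIcc (0:ℝ) T, HasDerivAt (fun t => Real.exp (-l*t) * u t)
        (Real.exp (-l*y) * u' y - l * (Real.exp (-l*y) * u y)) y := by
      intro y hy
      rw [uIcc_of_le hT] at hy
      have := (exp_deriv_at l y).mul (hud y hy.1)
      exact this.congr_deriv (by ring)
    have hint : IntervalIntegrable
        (fun y => Real.exp (-l*y) * u' y - l * (Real.exp (-l*y) * u y)) volume 0 T :=
      hiu'.sub (hiu.const_mul l)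
    have h := intervalIntegral.integral_eq_sub_of_hasDerivAt hderiv hint
    rw [intervalIntegral.integral_sub hiu' (hiu.const_mul l),
      intervalIntegral.integral_const_mul] at h
    have h0 : Real.exp (-l*0) * u 0 = u 0 := by norm_num
    rw [h0] at h
    linarith [h]
  have t1 : Tendsto (fun T => ∫ y in (0:ℝ)..T, Real.exp (-l*y) * u' y) atTop
      (𝓝 (∫ y in Ioi (0:ℝ), Real.exp (-l*y) * u' y)) :=
    intervalIntegral_tendsto_integral_Ioi 0 int_u' tendsto_id
  have t2 : Tendsto (fun T => ∫ y in (0:ℝ)..T, Real.exp (-l*y) * u y) atTop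
      (𝓝 (∫ x in Ioi (0:ℝ), Real.exp (-l*x) * u x)) :=
    intervalIntegral_tendsto_integral_Ioi 0 int_u tendsto_id
  have t3 : Tendsto (fun T => Real.exp (-l*T) * u T) atTop (𝓝 0) := by
    apply squeeze_zero_norm' ?_ (exp_mul_tendsto_zero w l M hl)
    filter_upwards [eventually_ge_atTop (0:ℝ)] with T hT
    have h1 := hubd T hT
    have h2 : |Real.exp (-l*T) * u T| = Real.exp (-l*T) * |u T| := by
      rw [abs_mul, abs_of_pos (Real.exp_pos _)]
    rw [Real.norm_eq_abs, h2]
    calc Real.exp (-l*T) * |u T| ≤ Real.exp (-l*T) * (M * Real.exp (w*T)) :=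
          mul_le_mul_of_nonneg_left h1 (Real.exp_pos _).le
    _ = M * Real.exp ((w-l)*T) := by
          rw [show (w-l)*T = w*T + (-l*T) by ring, Real.exp_add]; ring
  have t4 : Tendsto (fun T => Real.exp (-l*T) * u T - u 0
      + l * ∫ y in (0:ℝ)..T, Real.exp (-l*y) * u y) atTop
      (𝓝 (0 - u 0 + l * ∫ x in Ioi (0:ℝ), Real.exp (-l*x) * u x)) :=
    ((t3.sub tendsto_const_nhds).add ((t2.const_mul l)))
  have t5 : Tendsto (fun T => ∫ y in (0:ℝ)..T, Real.exp (-l*y) * u' y) atTop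
      (𝓝 (0 - u 0 + l * ∫ x in Ioi (0:ℝ), Real.exp (-l*x) * u x)) := by
    refine t4.congr' ?_
    filter_upwards [eventually_ge_atTop (0:ℝ)] with T hT
    exact (hftc T hT).symm
  have := tendsto_nhds_unique t1 t5
  rw [this]; ring

lemma fubini_step (μ : Measure ℝ)
    (hμ : ∫⁻ y in Ioi (0:ℝ), ENNReal.ofReal (min 1 y) ∂μ < ⊤)
    (w M : ℝ) (hw : 0 ≤ w) (hM : 0 < M)
    (v : ℝ → ℝ) (hv : Measurable v)
    (hvbd : ∀ᵐ t ∂(volume.restrict (Ioi (0:ℝ))), |v t| ≤ M * Real.exp (w * t))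
    {l : ℝ} (hl : w < l) (hl0 : 0 < l) :
    ∫ x in Ioi (0:ℝ), Real.exp (-l*x)
        * (∫ y in Ioo (0:ℝ) x, v y * (μ (Ioi (x-y))).toReal)
      = (∫ y in Ioi (0:ℝ), Real.exp (-l*y) * v y)
        * ∫ z in Ioi (0:ℝ), Real.exp (-l*z) * (μ (Ioi z)).toReal := by
  set F : ℝ → ℝ := fun z => (μ (Ioi z)).toReal with hF
  have hFmeas : Measurable F := (meas_tail μ).ennreal_toReal
  set g : ℝ → ℝ → ℝ := fun x y => if y < x then Real.exp (-l*x) * (v y * F (x-y)) else 0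
    with hg
  have hgmeas : Measurable (Function.uncurry g) := by
    apply Measurable.ite (measurableSet_lt measurable_snd measurable_fst)
    · exact (Real.measurable_exp.comp (measurable_fst.const_mul (-l))).mul
        ((hv.comp measurable_snd).mul
          (hFmeas.comp (measurable_fst.sub measurable_snd)))
    · exact measurable_const
  -- inner rewrite
  have hb : ∀ x ∈ Ioi (0:ℝ),
      Real.exp (-l*x) * (∫ y in Ioo (0:ℝ) x, v y * F (x-y))
      = ∫ y in Ioi (0:ℝ), g x y := by
    intro x _
    have h2 : ∀ y, g x y
        = (Iio x).indicator (fun y => Real.exp (-l*x) * (v y * F (x-y))) y := by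
      intro y; simp only [hg, Set.indicator_apply, mem_Iio]
    simp only [h2]
    rw [integral_indicator measurableSet_Iio, Measure.restrict_restrict measurableSet_Iio,
      show Iio x ∩ Ioi 0 = Ioo 0 x by ext t; simp [mem_Ioo, and_comm],
      integral_const_mul]
  -- the dominating function on the product
  set H : ℝ × ℝ → ℝ≥0∞ := fun p =>
      if p.2 < p.1 then ENNReal.ofReal (Real.exp (-l*p.1))
        * ENNReal.ofReal (M * Real.exp (w*p.2)) * μ (Ioi (p.1-p.2)) else 0
    with hH
  have hHmeas : Measurable H := by
    apply Measurable.ite (measurableSet_lt measurable_snd measurable_fst)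
    · exact ((Real.measurable_exp.comp (measurable_fst.const_mul (-l))).ennreal_ofReal.mul
        ((Real.measurable_exp.comp (measurable_snd.const_mul w)).const_mul
          M).ennreal_ofReal).mul ((meas_tail μ).comp (measurable_fst.sub measurable_snd))
    · exact measurable_const
  set P := (volume.restrict (Ioi (0:ℝ))).prod (volume.restrict (Ioi (0:ℝ))) with hP
  -- a.e. domination
  have hdom : ∀ᵐ p ∂P, (‖Function.uncurry g p‖₊ : ℝ≥0∞) ≤ H p := by
    have hsnd : ∀ᵐ p ∂P, |v p.2| ≤ M * Real.exp (w * p.2) :=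
      Measure.quasiMeasurePreserving_snd.ae hvbd
    filter_upwards [hsnd] with p hp
    rcases lt_or_ge p.2 p.1 with h | h
    · have hgp : Function.uncurry g p = Real.exp (-l*p.1) * (v p.2 * F (p.1-p.2)) := by
        simp only [Function.uncurry, hg, if_pos h]
      have hHp : H p = ENNReal.ofReal (Real.exp (-l*p.1))
          * ENNReal.ofReal (M * Real.exp (w*p.2)) * μ (Ioi (p.1-p.2)) := by
        simp only [hH, if_pos h]
      rw [hgp, hHp, ← enorm_eq_nnnorm, Real.enorm_eq_ofReal_abs]
      have habs : |Real.exp (-l*p.1) * (v p.2 * F (p.1-p.2))|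
          = Real.exp (-l*p.1) * (|v p.2| * F (p.1-p.2)) := by
        rw [abs_mul, abs_mul, abs_of_pos (Real.exp_pos _),
          abs_of_nonneg (ENNReal.toReal_nonneg : (0:ℝ) ≤ F (p.1-p.2))]
      rw [habs]
      calc ENNReal.ofReal (Real.exp (-l*p.1) * (|v p.2| * F (p.1-p.2)))
          = ENNReal.ofReal (Real.exp (-l*p.1)) * (ENNReal.ofReal (|v p.2|)
            * ENNReal.ofReal (F (p.1-p.2))) := by
            rw [ENNReal.ofReal_mul (Real.exp_pos _).le,
              ENNReal.ofReal_mul (abs_nonneg _)]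
        _ ≤ ENNReal.ofReal (Real.exp (-l*p.1))
            * (ENNReal.ofReal (M * Real.exp (w*p.2)) * μ (Ioi (p.1-p.2))) := by
            refine mul_le_mul_right (mul_le_mul' (ENNReal.ofReal_le_ofReal hp) ?_) _
            exact ENNReal.ofReal_toReal_le
        _ = ENNReal.ofReal (Real.exp (-l*p.1))
            * ENNReal.ofReal (M * Real.exp (w*p.2)) * μ (Ioi (p.1-p.2)) := by ring
    · have hgp : Function.uncurry g p = 0 := by
        simp only [Function.uncurry, hg, if_neg (not_lt.mpr h)]
      simp [hgp]
  -- finiteness of the H integral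
  have hHfin : ∫⁻ p, H p ∂P < ⊤ := by
    rw [hP, lintegral_prod_symm H hHmeas.aemeasurable]
    have hinner : ∀ y ∈ Ioi (0:ℝ),
        ∫⁻ x in Ioi (0:ℝ), H (x, y)
          = ENNReal.ofReal (M * Real.exp (w*y)) * ENNReal.ofReal (Real.exp (-l*y))
            * ∫⁻ z in Ioi (0:ℝ), ENNReal.ofReal (Real.exp (-l*z)) * μ (Ioi z) := by
      intro y hy
      have h2 : ∀ x, H (x, y) = (Ioi y).indicator
          (fun x => ENNReal.ofReal (Real.exp (-l*x))
            * ENNReal.ofReal (M * Real.exp (w*y)) * μ (Ioi (x-y))) x := by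
        intro x; simp only [hH, Set.indicator_apply, mem_Ioi]
      simp only [h2]
      rw [lintegral_indicator measurableSet_Ioi, Measure.restrict_restrict measurableSet_Ioi,
        inter_eq_left.mpr (Ioi_subset_Ioi (le_of_lt hy))]
      have h3 : ∀ x ∈ Ioi y,
          ENNReal.ofReal (Real.exp (-l*x)) * ENNReal.ofReal (M * Real.exp (w*y))
            * μ (Ioi (x-y))
          = (ENNReal.ofReal (M * Real.exp (w*y)) * ENNReal.ofReal (Real.exp (-l*y)))
            * (ENNReal.ofReal (Real.exp (-l*(x-y))) * μ (Ioi (x-y))) := by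
        intro x _
        rw [show (-l*x) = (-l*y) + (-l*(x-y)) by ring, Real.exp_add,
          ENNReal.ofReal_mul (Real.exp_pos _).le]
        ring
      rw [setLIntegral_congr_fun measurableSet_Ioi h3,
        lintegral_const_mul' _ _ (ENNReal.mul_ne_top ENNReal.ofReal_ne_top
          ENNReal.ofReal_ne_top)]
      congr 1
      exact lshift (fun z => ENNReal.ofReal (Real.exp (-l*z)) * μ (Ioi z))
        ((Real.measurable_exp.comp (measurable_id.const_mul (-l))).ennreal_ofReal.mul
          (meas_tail μ)) y
    rw [setLIntegral_congr_fun measurableSet_Ioi hinner]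
    set C := ∫⁻ z in Ioi (0:ℝ), ENNReal.ofReal (Real.exp (-l*z)) * μ (Ioi z) with hC
    have hCfin : C < ⊤ := c'_lt_top μ hμ hl0
    have h4 : ∀ y : ℝ, ENNReal.ofReal (M * Real.exp (w*y))
        * ENNReal.ofReal (Real.exp (-l*y)) * C
        = ENNReal.ofReal (M * Real.exp ((w-l)*y)) * C := by
      intro y
      rw [← ENNReal.ofReal_mul (by positivity)]
      congr 2
      rw [show (w-l)*y = w*y + (-l*y) by ring, Real.exp_add]
      ring
    simp only [h4]
    rw [lintegral_mul_const' _ _ hCfin.ne]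
    apply ENNReal.mul_lt_top _ hCfin
    have hexpint : IntegrableOn (fun t : ℝ => M * Real.exp ((w-l)*t)) (Ioi (0:ℝ)) := by
      have h := (exp_neg_integrableOn_Ioi (0:ℝ) (show (0:ℝ) < l - w by linarith)).const_mul M
      have hfun : (fun x : ℝ => M * Real.exp (-(l - w) * x))
          = fun t => M * Real.exp ((w-l)*t) := by
        funext x; ring_nf
      rwa [hfun] at h
    have := hexpint.hasFiniteIntegral
    rwa [hasFiniteIntegral_iff_ofReal (ae_of_all _ fun t => by positivity)] at this
  have hprod : Integrable (Function.uncurry g) P := by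
    constructor
    · exact hgmeas.aestronglyMeasurable
    · exact lt_of_le_of_lt (lintegral_mono_ae hdom) hHfin
  -- swap
  have hswap : ∫ x in Ioi (0:ℝ), (∫ y in Ioi (0:ℝ), g x y)
      = ∫ y in Ioi (0:ℝ), (∫ x in Ioi (0:ℝ), g x y) :=
    integral_integral_swap hprod
  -- compute inner integral after swap
  have hb2 : ∀ y ∈ Ioi (0:ℝ), ∫ x in Ioi (0:ℝ), g x y
      = (Real.exp (-l*y) * v y) * ∫ z in Ioi (0:ℝ), Real.exp (-l*z) * F z := by
    intro y hy
    have h2 : ∀ x, g x y = (Ioi y).indicator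
        (fun x => Real.exp (-l*x) * (v y * F (x-y))) x := by
      intro x; simp only [hg, Set.indicator_apply, mem_Ioi]
    simp only [h2]
    rw [integral_indicator measurableSet_Ioi, Measure.restrict_restrict measurableSet_Ioi,
      inter_eq_left.mpr (Ioi_subset_Ioi (le_of_lt hy))]
    have h3 : ∀ x ∈ Ioi y,
        Real.exp (-l*x) * (v y * F (x-y))
        = (Real.exp (-l*y) * v y) * (Real.exp (-l*(x-y)) * F (x-y)) := by
      intro x _
      rw [show (-l*x) = (-l*y) + (-l*(x-y)) by ring, Real.exp_add]
      ring
    rw [setIntegral_congr_fun measurableSet_Ioi h3, integral_const_mul]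
    congr 1
    exact rshift (fun z => Real.exp (-l*z) * F z) y
  -- conclude
  calc ∫ x in Ioi (0:ℝ), Real.exp (-l*x) * (∫ y in Ioo (0:ℝ) x, v y * F (x-y))
      = ∫ x in Ioi (0:ℝ), (∫ y in Ioi (0:ℝ), g x y) :=
        setIntegral_congr_fun measurableSet_Ioi fun x hx => hb x hx
    _ = ∫ y in Ioi (0:ℝ), (∫ x in Ioi (0:ℝ), g x y) := hswap
    _ = ∫ y in Ioi (0:ℝ), (Real.exp (-l*y) * v y)
          * ∫ z in Ioi (0:ℝ), Real.exp (-l*z) * F z :=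
        setIntegral_congr_fun measurableSet_Ioi fun y hy => hb2 y hy
    _ = (∫ y in Ioi (0:ℝ), Real.exp (-l*y) * v y)
          * ∫ z in Ioi (0:ℝ), Real.exp (-l*z) * F z := by
        rw [integral_mul_const]

/-- Laplace transform of the Caputo–Dzherbashian-type derivative
`𝔇_μ u(x) = ∫_0^x u'(y) μ̄(x−y) dy` with tail `μ̄(z) = μ((z,∞))`:
for `λ > max(w,0)`,
`∫_0^∞ e^{-λx} 𝔇_μ u(x) dx = Φ(λ) ũ(λ) − (Φ(λ)/λ) u(0)`. -/
theorem laplace_caputo_type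
    (μ : Measure ℝ)
    (hμ : ∫⁻ y in Ioi (0:ℝ), ENNReal.ofReal (min 1 y) ∂μ < ⊤)
    (w M : ℝ) (hw : 0 ≤ w) (hM : 0 < M)
    (u u' : ℝ → ℝ)
    (hud : ∀ t ∈ Ici (0:ℝ), HasDerivAt u (u' t) t)
    (hubd : ∀ t ∈ Ici (0:ℝ), |u t| ≤ M * Real.exp (w * t))
    (hu'bd : ∀ᵐ t ∂(volume.restrict (Ioi (0:ℝ))), |u' t| ≤ M * Real.exp (w * t))
    (l : ℝ) (hl : max w 0 < l) :
    ∫ x in Ioi (0:ℝ), Real.exp (-l * x)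
        * (∫ y in Ioo (0:ℝ) x, u' y * (μ (Ioi (x - y))).toReal)
      = (∫ y in Ioi (0:ℝ), (1 - Real.exp (-l * y)) ∂μ)
          * (∫ x in Ioi (0:ℝ), Real.exp (-l * x) * u x)
        - ((∫ y in Ioi (0:ℝ), (1 - Real.exp (-l * y)) ∂μ) / l) * u 0 := by
  have hl0 : 0 < l := lt_of_le_of_lt (le_max_right w 0) hl
  have hwl : w < l := lt_of_le_of_lt (le_max_left w 0) hl
  set v : ℝ → ℝ := deriv u with hvdef
  have hveq : ∀ t ∈ Ici (0:ℝ), v t = u' t := fun t ht => (hud t ht).deriv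
  have hvbd : ∀ᵐ t ∂(volume.restrict (Ioi (0:ℝ))), |v t| ≤ M * Real.exp (w * t) := by
    filter_upwards [hu'bd, ae_restrict_mem measurableSet_Ioi] with t h1 h2
    rw [hveq t (mem_Ici.mpr (le_of_lt h2))]
    exact h1
  -- rewrite the inner integral in terms of `v`
  have hinner : ∀ x ∈ Ioi (0:ℝ),
      ∫ y in Ioo (0:ℝ) x, u' y * (μ (Ioi (x - y))).toReal
      = ∫ y in Ioo (0:ℝ) x, v y * (μ (Ioi (x - y))).toReal := by
    intro x _
    refine setIntegral_congr_fun measurableSet_Ioo fun y hy => ?_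
    rw [hveq y (le_of_lt hy.1)]
  have hLHS : ∫ x in Ioi (0:ℝ), Real.exp (-l * x)
        * (∫ y in Ioo (0:ℝ) x, u' y * (μ (Ioi (x - y))).toReal)
      = ∫ x in Ioi (0:ℝ), Real.exp (-l * x)
        * (∫ y in Ioo (0:ℝ) x, v y * (μ (Ioi (x - y))).toReal) := by
    refine setIntegral_congr_fun measurableSet_Ioi fun x hx => ?_
    rw [hinner x hx]
  have hfub := fubini_step μ hμ w M hw hM v (measurable_deriv u) hvbd hwl hl0
  have hI1 : ∫ y in Ioi (0:ℝ), Real.exp (-l*y) * v y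
      = ∫ y in Ioi (0:ℝ), Real.exp (-l*y) * u' y := by
    refine setIntegral_congr_fun measurableSet_Ioi fun y hy => ?_
    rw [hveq y (mem_Ici.mpr (le_of_lt hy))]
  obtain ⟨_, _, hld⟩ := lap_deriv w M hw hM u u' hud hubd hu'bd hwl hl0
  rw [hLHS, hfub, hI1, hld, k_eq μ hμ hl0]
  field_simp
end

section
/- For every x > 0 and λ > 0, one has ∫_0^∞ e^{-λt} (x/t) e^{-x²/(4t)}/√(4πt) dt = e^{-x√λ}. -/
/-!
Substituting `t = x ^ 2 / (4 * u ^ 2)` turns the integral into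
`2 / √π * ∫_0^∞ exp (-u ^ 2 - a ^ 2 / u ^ 2) du` with `a = x * √λ / 2`, and
`u ^ 2 + a ^ 2 / u ^ 2 = (u - a / u) ^ 2 + 2 * a`. The map `u ↦ u - a / u` is a bijection from
`(0, ∞)` onto `ℝ` with Jacobian `1 + a / u ^ 2`, and the involution `u ↦ a / u` shows that the two
parts of the Jacobian contribute equally; hence `∫_0^∞ exp (-(u - a / u) ^ 2) du` is half the
Gaussian integral, `√π / 2`.
-/
open MeasureTheory Real Set Filter Topology

variable {E : Type*} [NormedAddCommGroup E] [NormedSpace ℝ E]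

theorem integral_Ioi_comp_div_pow (g : ℝ → E) {c : ℝ} (hc : 0 < c) {n : ℕ} (hn : n ≠ 0) :
    ∫ u in Ioi 0, (n * c / u ^ (n + 1)) • g (c / u ^ n) = ∫ t in Ioi 0, g t := by
  have hp : (-n : ℝ) ≠ 0 := by simpa using hn
  calc ∫ u in Ioi 0, (n * c / u ^ (n + 1)) • g (c / u ^ n)
      = c • ∫ u in Ioi 0, (|(-n : ℝ)| * u ^ ((-n : ℝ) - 1)) • g (c * u ^ (-n : ℝ)) := by
        rw [← integral_smul]
        refine setIntegral_congr_fun measurableSet_Ioi fun u (hu : 0 < u) => ?_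
        have h1 : u ^ ((-n : ℝ) - 1) = (u ^ (n + 1))⁻¹ := by
          rw [show (-n : ℝ) - 1 = -((n + 1 : ℕ) : ℝ) by push_cast; ring, rpow_neg hu.le,
            rpow_natCast]
        rw [h1, rpow_neg hu.le, rpow_natCast, smul_smul, abs_neg, Nat.abs_cast]
        ring_nf
    _ = c • ∫ y in Ioi 0, g (c * y) := by rw [integral_comp_rpow_Ioi (fun y => g (c * y)) hp]
    _ = ∫ t in Ioi 0, g t := by
        rw [integral_comp_mul_left_Ioi' g 0 hc, mul_zero]

section

variable {a : ℝ}

theorem hasDerivAt_sub_div {u : ℝ} (hu : u ≠ 0) :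
    HasDerivAt (fun u => u - a / u) (1 + a / u ^ 2) u := by
  simpa [div_eq_mul_inv] using (hasDerivAt_id' u).fun_sub ((hasDerivAt_inv hu).const_mul a)

theorem strictMonoOn_sub_div (ha : 0 < a) : StrictMonoOn (fun u => u - a / u) (Ioi 0) :=
  fun u (hu : 0 < u) _ _ huv => sub_lt_sub huv (div_lt_div_of_pos_left ha hu huv)

theorem image_sub_div_Ioi (ha : 0 < a) : (fun u => u - a / u) '' Ioi 0 = univ := by
  refine eq_univ_of_forall fun s => ?_
  -- the positive root of `u ^ 2 - s * u - a = 0`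
  set r := √(s ^ 2 + 4 * a)
  have hr : r ^ 2 = s ^ 2 + 4 * a := sq_sqrt (by positivity)
  have hsr : -s < r := by nlinarith [sqrt_nonneg (s ^ 2 + 4 * a), sq_nonneg (r + s)]
  refine ⟨(s + r) / 2, by simp only [mem_Ioi]; linarith, ?_⟩
  have hne : s + r ≠ 0 := by linarith
  field_simp
  nlinarith

/-- The Cauchy–Schlömilch substitution. -/
theorem integral_Ioi_comp_sub_div {f : ℝ → E} (hf : Integrable f) (hf_even : Function.Even f)
    (ha : 0 < a) : ∫ u in Ioi 0, f (u - a / u) = (2 : ℝ)⁻¹ • ∫ s, f s := by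
  have hderiv : ∀ u ∈ Ioi (0 : ℝ),
      HasDerivWithinAt (fun u => u - a / u) (1 + a / u ^ 2) (Ioi 0) u :=
    fun u hu => (hasDerivAt_sub_div (ne_of_gt hu)).hasDerivWithinAt
  have habs : ∀ u ∈ Ioi (0 : ℝ),
      |1 + a / u ^ 2| • f (u - a / u) = (1 + a / u ^ 2) • f (u - a / u) :=
    fun u (hu : 0 < u) => by rw [abs_of_pos (by positivity)]
  have hinj := (strictMonoOn_sub_div ha).injOn
  have hjac : ∫ s, f s = ∫ u in Ioi 0, (1 + a / u ^ 2) • f (u - a / u) := by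
    rw [← setIntegral_univ, ← image_sub_div_Ioi ha,
      integral_image_eq_integral_abs_deriv_smul measurableSet_Ioi hderiv hinj,
      setIntegral_congr_fun measurableSet_Ioi habs]
  have hjac_int : IntegrableOn (fun u => (1 + a / u ^ 2) • f (u - a / u)) (Ioi 0) := by
    refine ((integrableOn_image_iff_integrableOn_abs_deriv_smul measurableSet_Ioi hderiv hinj
      f).mp ?_).congr_fun habs measurableSet_Ioi
    rw [image_sub_div_Ioi ha]
    exact hf.integrableOn
  have hint : IntegrableOn (fun u => f (u - a / u)) (Ioi 0) := by
    refine IntegrableOn.congr_fun (hjac_int.bdd_smul 1 (φ := fun u => (1 + a / u ^ 2)⁻¹) ?_ ?_)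
      (fun u (hu : 0 < u) => ?_) measurableSet_Ioi
    · have hcont : ContinuousOn (fun u : ℝ => 1 + a / u ^ 2) (Ioi 0) := by
        fun_prop (disch := exact fun u (hu : 0 < u) => pow_ne_zero 2 hu.ne')
      exact (hcont.inv₀ fun u (hu : 0 < u) => by positivity).aestronglyMeasurable
        measurableSet_Ioi
    · filter_upwards [ae_restrict_mem measurableSet_Ioi] with u (hu : 0 < u)
      rw [norm_inv, Real.norm_of_nonneg (by positivity)]
      exact inv_le_one_of_one_le₀ (by simp only [le_add_iff_nonneg_right]; positivity)
    · simp only [Pi.smul_apply', smul_smul]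
      rw [inv_mul_cancel₀ (by positivity), one_smul]
  -- `u ↦ a / u` turns `u - a / u` into its negative
  have hswap : ∫ u in Ioi 0, (a / u ^ 2) • f (u - a / u) = ∫ u in Ioi 0, f (u - a / u) := by
    rw [← integral_Ioi_comp_div_pow (fun u => f (u - a / u)) ha one_ne_zero]
    refine setIntegral_congr_fun measurableSet_Ioi fun u (hu : 0 < u) => ?_
    rw [← hf_even]
    congr 2
    · simp
    · field_simp
      ring
  have hsplit : (fun u => (1 + a / u ^ 2) • f (u - a / u))
      = fun u => f (u - a / u) + (a / u ^ 2) • f (u - a / u) := by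
    ext u
    rw [add_smul, one_smul]
  have hint' : IntegrableOn (fun u => (a / u ^ 2) • f (u - a / u)) (Ioi 0) := by
    refine (hjac_int.sub hint).congr_fun (fun u _ => ?_) measurableSet_Ioi
    simp only [Pi.sub_apply, add_smul, one_smul, add_sub_cancel_left]
  rw [hjac, hsplit, integral_add hint hint', hswap, ← two_smul ℝ, smul_smul,
    inv_mul_cancel₀ two_ne_zero, one_smul]

end

theorem integral_Ioi_exp_neg_sq_sub_sq_div_sq {a : ℝ} (ha : 0 ≤ a) :
    ∫ u in Ioi 0, exp (-u ^ 2 - a ^ 2 / u ^ 2) = √π / 2 * exp (-(2 * a)) := by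
  rcases ha.eq_or_lt with rfl | ha
  · simpa using integral_gaussian_Ioi 1
  have hgauss_even : Function.Even fun s : ℝ => exp (-s ^ 2) := fun s => by simp only [neg_sq]
  have hgauss_int : Integrable fun s : ℝ => exp (-s ^ 2) := by
    simpa using integrable_exp_neg_mul_sq one_pos
  calc ∫ u in Ioi 0, exp (-u ^ 2 - a ^ 2 / u ^ 2)
      = exp (-(2 * a)) * ∫ u in Ioi 0, exp (-(u - a / u) ^ 2) := by
        rw [← integral_const_mul]
        refine setIntegral_congr_fun measurableSet_Ioi fun u (hu : 0 < u) => ?_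
        rw [← exp_add]
        congr 1
        field_simp
        ring
    _ = √π / 2 * exp (-(2 * a)) := by
        rw [integral_Ioi_comp_sub_div hgauss_int hgauss_even ha, smul_eq_mul]
        have hgauss : ∫ s, exp (-s ^ 2) = √π := by simpa using integral_gaussian 1
        rw [hgauss]
        ring

/-- Laplace transform identity `∫_0^∞ e^{-λt} (x/t) g(t,x) dt = e^{-x√λ}` for the
heat kernel `g(t,x) = e^{-x²/(4t)}/√(4πt)`, valid for `x > 0`, `λ > 0`. -/
theorem laplace_heat_kernel_hitting (x l : ℝ) (hx : 0 < x) (hl : 0 < l) :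
    ∫ t in Ioi (0:ℝ),
        Real.exp (-l * t) * ((x / t) * (Real.exp (-x ^ 2 / (4 * t)) / Real.sqrt (4 * Real.pi * t)))
      = Real.exp (-x * Real.sqrt l) := by
  -- substitute `t = x ^ 2 / (4 * u ^ 2)`
  rw [← integral_Ioi_comp_div_pow _ (by positivity : 0 < x ^ 2 / 4) two_ne_zero]
  set a := x * √l / 2
  have hsubst : ∀ u ∈ Ioi (0 : ℝ), ((2 : ℕ) * (x ^ 2 / 4) / u ^ (2 + 1)) •
        (exp (-l * (x ^ 2 / 4 / u ^ 2)) * ((x / (x ^ 2 / 4 / u ^ 2)) *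
          (exp (-x ^ 2 / (4 * (x ^ 2 / 4 / u ^ 2))) / √(4 * π * (x ^ 2 / 4 / u ^ 2)))))
      = 2 / √π * exp (-u ^ 2 - a ^ 2 / u ^ 2) := by
    intro u (hu : 0 < u)
    have hsqrt : √(4 * π * (x ^ 2 / 4 / u ^ 2)) = √π * (x / u) := by
      rw [show 4 * π * (x ^ 2 / 4 / u ^ 2) = π * (x / u) ^ 2 by field_simp,
        sqrt_mul pi_pos.le, sqrt_sq (by positivity)]
    have hexp : exp (-l * (x ^ 2 / 4 / u ^ 2)) * exp (-x ^ 2 / (4 * (x ^ 2 / 4 / u ^ 2)))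
        = exp (-u ^ 2 - a ^ 2 / u ^ 2) := by
      rw [← exp_add]
      congr 1
      simp only [a, div_pow, mul_pow, sq_sqrt hl.le]
      field_simp
      ring
    rw [hsqrt, smul_eq_mul, ← hexp]
    field_simp
    ring
  rw [setIntegral_congr_fun measurableSet_Ioi hsubst, integral_const_mul,
    integral_Ioi_exp_neg_sq_sub_sq_div_sq (by positivity), show -x * √l = -(2 * a) by ring]
  field_simp
end

section
/- Let f : (0,∞) → ℝ be bounded and measurable, and let λ > 0, x > 0. Then the Laplace transform of the Dirichlet semigroup Q^D_t f(x) = ∫_0^∞ (g(t,x−y) − g(t,x+y)) f(y) dy, where g(t,z) = e^{-z²/(4t)}/√(4πt), satisfies ∫_0^∞ e^{-λt} Q^D_t f(x) dt = (1/(2√λ)) ∫_0^∞ (e^{-|x−y|√λ} − e^{-(x+y)√λ}) f(y) dy. -/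
open MeasureTheory Real Set Filter Topology


lemma phi_image (a b : ℝ) (ha : 0 < a) (hb : 0 < b) :
    (fun u : ℝ => Real.sqrt a * u - Real.sqrt b / u) '' (Ioi 0) = univ := by
  have hsa : (0:ℝ) < Real.sqrt a := Real.sqrt_pos.mpr ha
  have hsb : (0:ℝ) < Real.sqrt b := Real.sqrt_pos.mpr hb
  ext v
  simp only [mem_univ, iff_true, mem_image, mem_Ioi]
  set s := Real.sqrt (v^2 + 4*(Real.sqrt a * Real.sqrt b)) with hs
  have hs2 : s^2 = v^2 + 4*(Real.sqrt a * Real.sqrt b) := Real.sq_sqrt (by positivity)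
  have hvs : v < s := by
    nlinarith [Real.sqrt_nonneg (v^2 + 4*(Real.sqrt a * Real.sqrt b)), abs_nonneg v, sq_abs v, le_abs_self v]
  have hvs' : 0 < v + s := by nlinarith [neg_abs_le v, sq_abs v, Real.sqrt_nonneg (v^2 + 4*(Real.sqrt a * Real.sqrt b))]
  refine ⟨(v + s)/(2*Real.sqrt a), by positivity, ?_⟩
  have hne : v + s ≠ 0 := ne_of_gt hvs'
  field_simp
  nlinarith [hs2, sq_nonneg (v+s)]

lemma phi_injOn (a b : ℝ) (hb : 0 < b) :
    InjOn (fun u : ℝ => Real.sqrt a * u - Real.sqrt b / u) (Ioi 0) := by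
  have hsb : (0:ℝ) < Real.sqrt b := Real.sqrt_pos.mpr hb
  apply StrictMonoOn.injOn
  intro u hu v hv huv
  simp only [mem_Ioi] at hu hv
  have h1 : Real.sqrt a * u ≤ Real.sqrt a * v :=
    mul_le_mul_of_nonneg_left huv.le (Real.sqrt_nonneg a)
  have h2 : Real.sqrt b / v < Real.sqrt b / u := div_lt_div_of_pos_left hsb hu huv
  simp only
  linarith

lemma phi_hasDeriv (a b : ℝ) {u : ℝ} (hu : u ≠ 0) :
    HasDerivAt (fun u : ℝ => Real.sqrt a * u - Real.sqrt b / u)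
      (Real.sqrt a + Real.sqrt b / u^2) u := by
  have h1 : HasDerivAt (fun u : ℝ => Real.sqrt a * u) (Real.sqrt a) u := by
    simpa using (hasDerivAt_id u).const_mul (Real.sqrt a)
  have h2 : HasDerivAt (fun u : ℝ => Real.sqrt b / u) (Real.sqrt b * (-(u^2)⁻¹)) u := by
    simpa [div_eq_mul_inv] using (hasDerivAt_inv hu).const_mul (Real.sqrt b)
  have := h1.sub h2
  rw [show Real.sqrt a + Real.sqrt b / u^2 = Real.sqrt a - Real.sqrt b * (-(u^2)⁻¹) by ring]
  exact this

-- substitution v = φ(u) over Ioi 0 maps to all of ℝ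
lemma glasser_full (a b : ℝ) (ha : 0 < a) (hb : 0 < b) :
    (∫ u in Ioi (0:ℝ), (Real.sqrt a + Real.sqrt b / u^2) *
      Real.exp (-(Real.sqrt a * u - Real.sqrt b / u)^2)) = Real.sqrt π := by
  have key := integral_image_eq_integral_abs_deriv_smul (f := fun u : ℝ => Real.sqrt a * u - Real.sqrt b / u)
      (f' := fun u : ℝ => Real.sqrt a + Real.sqrt b / u^2) measurableSet_Ioi
      (fun u hu => (phi_hasDeriv a b (ne_of_gt (mem_Ioi.mp hu))).hasDerivWithinAt)
      (phi_injOn a b hb) (fun v => Real.exp (-v^2))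
  rw [phi_image a b ha hb] at key
  rw [Measure.restrict_univ] at key
  have h1 : (∫ v : ℝ, Real.exp (-v^2)) = Real.sqrt π := by
    simpa using integral_gaussian 1
  rw [h1] at key
  rw [key]
  apply setIntegral_congr_fun measurableSet_Ioi
  intro u hu
  have hpos : (0:ℝ) < Real.sqrt a + Real.sqrt b / u^2 := by
    have := mem_Ioi.mp hu
    positivity
  simp [abs_of_pos hpos, smul_eq_mul]

lemma glasser_full_integrable (a b : ℝ) (ha : 0 < a) (hb : 0 < b) :
    IntegrableOn (fun u : ℝ => (Real.sqrt a + Real.sqrt b / u^2) *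
      Real.exp (-(Real.sqrt a * u - Real.sqrt b / u)^2)) (Ioi 0) := by
  have key := (integrableOn_image_iff_integrableOn_abs_deriv_smul
      (f := fun u : ℝ => Real.sqrt a * u - Real.sqrt b / u)
      (f' := fun u : ℝ => Real.sqrt a + Real.sqrt b / u^2) measurableSet_Ioi
      (fun u hu => (phi_hasDeriv a b (ne_of_gt (mem_Ioi.mp hu))).hasDerivWithinAt)
      (phi_injOn a b hb) (fun v => Real.exp (-v^2)))
  rw [phi_image a b ha hb] at key
  have h1 : IntegrableOn (fun v : ℝ => Real.exp (-v^2)) univ := by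
    rw [integrableOn_univ]
    simpa using integrable_exp_neg_mul_sq (show (0:ℝ) < 1 by norm_num)
  have h2 := key.mp h1
  apply h2.congr_fun ?_ measurableSet_Ioi
  intro u hu
  have hpos : (0:ℝ) < Real.sqrt a + Real.sqrt b / u^2 := by
    have := mem_Ioi.mp hu
    positivity
  simp [abs_of_pos hpos, smul_eq_mul]


-- reflection substitution: ψ u = √b/(√a u)
lemma glasser_reflect (a b : ℝ) (ha : 0 < a) (hb : 0 < b) :
    (∫ u in Ioi (0:ℝ), Real.sqrt a * Real.exp (-(Real.sqrt a * u - Real.sqrt b / u)^2))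
      = ∫ u in Ioi (0:ℝ), (Real.sqrt b / u^2) * Real.exp (-(Real.sqrt a * u - Real.sqrt b / u)^2) := by
  have hsa : (0:ℝ) < Real.sqrt a := Real.sqrt_pos.mpr ha
  have hsb : (0:ℝ) < Real.sqrt b := Real.sqrt_pos.mpr hb
  set c := Real.sqrt b / Real.sqrt a with hc
  have hcpos : 0 < c := by positivity
  have himg : (fun u : ℝ => c / u) '' (Ioi 0) = Ioi 0 := by
    ext v
    simp only [mem_image, mem_Ioi]
    constructor
    · rintro ⟨u, hu, rfl⟩; positivity
    · intro hv; exact ⟨c / v, by positivity, by field_simp⟩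
  have hinj : InjOn (fun u : ℝ => c / u) (Ioi 0) := by
    intro u hu v hv h
    simp only [mem_Ioi] at hu hv
    simp only at h
    field_simp at h
    exact h.symm
  have hderiv : ∀ u ∈ Ioi (0:ℝ), HasDerivWithinAt (fun u : ℝ => c / u) (-(c / u^2)) (Ioi 0) u := by
    intro u hu
    have hu0 : u ≠ 0 := ne_of_gt (mem_Ioi.mp hu)
    have : HasDerivAt (fun u : ℝ => c / u) (c * (-(u^2)⁻¹)) u := by
      simpa [div_eq_mul_inv] using (hasDerivAt_inv hu0).const_mul c
    refine (this.congr_deriv ?_).hasDerivWithinAt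
    field_simp
  have key := integral_image_eq_integral_abs_deriv_smul (f := fun u : ℝ => c / u)
      (f' := fun u : ℝ => -(c / u^2)) measurableSet_Ioi hderiv hinj
      (fun v => Real.exp (-(Real.sqrt a * v - Real.sqrt b / v)^2))
  rw [himg] at key
  rw [integral_const_mul, key, ← integral_const_mul]
  apply setIntegral_congr_fun measurableSet_Ioi
  intro u hu
  have hu0 : (0:ℝ) < u := mem_Ioi.mp hu
  have habs : |(-(c / u^2))| = c / u^2 := by
    rw [abs_neg, abs_of_pos (by positivity)]
  have harg : Real.sqrt a * (c / u) - Real.sqrt b / (c / u)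
      = -(Real.sqrt a * u - Real.sqrt b / u) := by
    rw [hc]; field_simp; ring
  simp only [smul_eq_mul, habs, harg, neg_sq]
  rw [hc]
  field_simp


lemma phi_exp_meas (a b : ℝ) :
    Measurable (fun u : ℝ => Real.exp (-(Real.sqrt a * u - Real.sqrt b / u)^2)) :=
  Real.measurable_exp.comp ((((measurable_const.mul measurable_id').sub
    (measurable_const.div measurable_id')).pow_const 2).neg)

lemma glasser_piece1_integrable (a b : ℝ) (ha : 0 < a) (hb : 0 < b) :
    IntegrableOn (fun u : ℝ => Real.sqrt a *
      Real.exp (-(Real.sqrt a * u - Real.sqrt b / u)^2)) (Ioi 0) := by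
  apply Integrable.mono' (glasser_full_integrable a b ha hb)
    ((measurable_const.mul (phi_exp_meas a b)).aestronglyMeasurable)
  filter_upwards [self_mem_ae_restrict (measurableSet_Ioi : MeasurableSet (Ioi (0:ℝ)))] with u hu
  have hu0 : (0:ℝ) < u := hu
  have he : (0:ℝ) < Real.exp (-(Real.sqrt a * u - Real.sqrt b / u)^2) := Real.exp_pos _
  simp only [Pi.mul_apply, Pi.div_apply]
  rw [Real.norm_eq_abs, abs_of_nonneg (by positivity)]
  have : (0:ℝ) ≤ Real.sqrt b / u^2 := by positivity
  nlinarith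

lemma glasser_piece2_integrable (a b : ℝ) (ha : 0 < a) (hb : 0 < b) :
    IntegrableOn (fun u : ℝ => (Real.sqrt b / u^2) *
      Real.exp (-(Real.sqrt a * u - Real.sqrt b / u)^2)) (Ioi 0) := by
  apply Integrable.mono' (glasser_full_integrable a b ha hb)
    (((measurable_const.div (measurable_id'.pow_const 2)).mul (phi_exp_meas a b)).aestronglyMeasurable)
  filter_upwards [self_mem_ae_restrict (measurableSet_Ioi : MeasurableSet (Ioi (0:ℝ)))] with u hu
  have hu0 : (0:ℝ) < u := hu
  have he : (0:ℝ) < Real.exp (-(Real.sqrt a * u - Real.sqrt b / u)^2) := Real.exp_pos _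
  simp only [Pi.mul_apply, Pi.div_apply]
  rw [Real.norm_eq_abs, abs_of_nonneg (by positivity)]
  have : (0:ℝ) ≤ Real.sqrt a := Real.sqrt_nonneg a
  nlinarith [mul_nonneg this he.le]

lemma glasser_half (a b : ℝ) (ha : 0 < a) (hb : 0 < b) :
    (∫ u in Ioi (0:ℝ), Real.exp (-(Real.sqrt a * u - Real.sqrt b / u)^2))
      = Real.sqrt π / (2 * Real.sqrt a) := by
  have hsa : (0:ℝ) < Real.sqrt a := Real.sqrt_pos.mpr ha
  have hsplit : (∫ u in Ioi (0:ℝ), (Real.sqrt a + Real.sqrt b / u^2) *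
      Real.exp (-(Real.sqrt a * u - Real.sqrt b / u)^2))
      = (∫ u in Ioi (0:ℝ), Real.sqrt a * Real.exp (-(Real.sqrt a * u - Real.sqrt b / u)^2))
        + ∫ u in Ioi (0:ℝ), (Real.sqrt b / u^2) * Real.exp (-(Real.sqrt a * u - Real.sqrt b / u)^2) := by
    rw [← integral_add (glasser_piece1_integrable a b ha hb) (glasser_piece2_integrable a b ha hb)]
    congr 1
    funext u
    ring
  have h1 := glasser_full a b ha hb
  rw [hsplit, ← glasser_reflect a b ha hb, integral_const_mul] at h1
  have : Real.sqrt π = 2 * (Real.sqrt a * ∫ u in Ioi (0:ℝ),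
      Real.exp (-(Real.sqrt a * u - Real.sqrt b / u)^2)) := by linarith
  rw [eq_div_iff (by positivity)]
  linarith

lemma glasser (a b : ℝ) (ha : 0 < a) (hb : 0 < b) :
    (∫ u in Ioi (0:ℝ), Real.exp (-(a * u^2 + b / u^2)))
      = Real.sqrt π / (2 * Real.sqrt a) * Real.exp (-(2 * Real.sqrt (a * b))) := by
  have h1 : ∀ u ∈ Ioi (0:ℝ), Real.exp (-(a * u^2 + b / u^2))
      = Real.exp (-(2 * Real.sqrt (a*b))) * Real.exp (-(Real.sqrt a * u - Real.sqrt b / u)^2) := by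
    intro u hu
    have hu0 : (0:ℝ) < u := hu
    rw [← Real.exp_add]
    congr 1
    have e1 : Real.sqrt a ^ 2 = a := Real.sq_sqrt ha.le
    have e2 : Real.sqrt b ^ 2 = b := Real.sq_sqrt hb.le
    have e3 : Real.sqrt (a*b) = Real.sqrt a * Real.sqrt b := Real.sqrt_mul ha.le b
    rw [e3]
    field_simp
    linear_combination (u^2*u^2) * e1 + e2
  rw [setIntegral_congr_fun measurableSet_Ioi h1, integral_const_mul, glasser_half a b ha hb]
  ring


lemma sq_image_Ioi : (fun u : ℝ => u^2) '' (Ioi 0) = Ioi 0 := by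
  ext v
  simp only [mem_image, mem_Ioi]
  constructor
  · rintro ⟨u, hu, rfl⟩; positivity
  · intro hv; exact ⟨Real.sqrt v, Real.sqrt_pos.mpr hv, Real.sq_sqrt hv.le⟩

lemma sq_injOn : InjOn (fun u : ℝ => u^2) (Ioi 0) := by
  intro u hu v hv h
  simp only at h
  simp only [mem_Ioi] at hu hv
  nlinarith

lemma sq_hasDeriv (u : ℝ) : HasDerivAt (fun u : ℝ => u^2) (2*u) u := by
  simpa [mul_comm] using hasDerivAt_pow 2 u

-- substitution t = u^2 for the heat-kernel Laplace integrand
lemma heat_subst (l z : ℝ) :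
    (∫ t in Ioi (0:ℝ), Real.exp (-l * t) * (Real.exp (-z^2 / (4*t)) / Real.sqrt (4*π*t)))
      = ∫ u in Ioi (0:ℝ), (1 / Real.sqrt π) * Real.exp (-(l * u^2 + (z^2/4) / u^2)) := by
  have key := integral_image_eq_integral_abs_deriv_smul (f := fun u : ℝ => u^2)
      (f' := fun u : ℝ => 2*u) measurableSet_Ioi
      (fun u _ => (sq_hasDeriv u).hasDerivWithinAt) sq_injOn
      (fun t => Real.exp (-l * t) * (Real.exp (-z^2 / (4*t)) / Real.sqrt (4*π*t)))
  rw [sq_image_Ioi] at key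
  rw [key]
  apply setIntegral_congr_fun measurableSet_Ioi
  intro u hu
  have hu0 : (0:ℝ) < u := hu
  have hsu : Real.sqrt (4*π*u^2) = Real.sqrt (4*π) * u := by
    rw [Real.sqrt_mul (by positivity), Real.sqrt_sq hu0.le]
  have h4pi : Real.sqrt (4*π) = 2 * Real.sqrt π := by
    rw [show (4:ℝ)*π = 2^2 * π by ring, Real.sqrt_mul (by positivity),
      Real.sqrt_sq (by norm_num : (0:ℝ) ≤ 2)]
  have hspi : (0:ℝ) < Real.sqrt π := Real.sqrt_pos.mpr Real.pi_pos
  simp only [smul_eq_mul, abs_of_pos (by positivity : (0:ℝ) < 2*u), hsu, h4pi]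
  have hprod : Real.exp (-(l * u^2 + z^2/4 / u^2))
      = Real.exp (-l * u^2) * Real.exp (-z^2 / (4*u^2)) := by
    rw [← Real.exp_add]
    congr 1
    field_simp
    ring
  rw [hprod]
  field_simp

lemma heat_laplace (l z : ℝ) (hl : 0 < l) :
    (∫ t in Ioi (0:ℝ), Real.exp (-l * t) * (Real.exp (-z^2 / (4*t)) / Real.sqrt (4*π*t)))
      = Real.exp (-|z| * Real.sqrt l) / (2 * Real.sqrt l) := by
  have hspi : (0:ℝ) < Real.sqrt π := Real.sqrt_pos.mpr Real.pi_pos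
  have hsl : (0:ℝ) < Real.sqrt l := Real.sqrt_pos.mpr hl
  rw [heat_subst, integral_const_mul]
  rcases eq_or_ne z 0 with rfl | hz
  · have : (∫ u in Ioi (0:ℝ), Real.exp (-(l * u^2 + ((0:ℝ)^2/4) / u^2)))
        = ∫ u in Ioi (0:ℝ), Real.exp (-l * u^2) := by
      apply setIntegral_congr_fun measurableSet_Ioi
      intro u hu
      norm_num
    rw [this, integral_gaussian_Ioi]
    simp only [abs_zero, neg_zero, zero_mul, Real.exp_zero]
    field_simp
    rw [← Real.sqrt_mul (by positivity), div_mul_cancel₀ _ hl.ne']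
  · have hb : (0:ℝ) < z^2/4 := by positivity
    rw [glasser l (z^2/4) hl hb]
    have : Real.sqrt (l * (z^2/4)) = Real.sqrt l * (|z|/2) := by
      rw [show l * (z^2/4) = (Real.sqrt l * (|z|/2))^2 by
        rw [mul_pow, Real.sq_sqrt hl.le]
        rw [div_pow, sq_abs]
        ring]
      exact Real.sqrt_sq (by positivity)
    rw [this]
    have : -(2 * (Real.sqrt l * (|z|/2))) = -|z| * Real.sqrt l := by ring
    rw [this]
    field_simp

lemma heat_laplace_integrable (l z : ℝ) (hl : 0 < l) :
    IntegrableOn (fun t => Real.exp (-l * t) * (Real.exp (-z^2 / (4*t)) / Real.sqrt (4*π*t)))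
      (Ioi (0:ℝ)) := by
  have key := integrableOn_image_iff_integrableOn_abs_deriv_smul (f := fun u : ℝ => u^2)
      (f' := fun u : ℝ => 2*u) measurableSet_Ioi
      (fun u _ => (sq_hasDeriv u).hasDerivWithinAt) sq_injOn
      (fun t => Real.exp (-l * t) * (Real.exp (-z^2 / (4*t)) / Real.sqrt (4*π*t)))
  rw [sq_image_Ioi] at key
  rw [key]
  have hmeas : Measurable (fun u : ℝ => |2*u| • (Real.exp (-l * u^2) *
      (Real.exp (-z^2 / (4*u^2)) / Real.sqrt (4*π*u^2)))) := by
    apply Measurable.smul (measurable_const.mul measurable_id').abs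
    exact (Real.measurable_exp.comp ((measurable_const.mul (measurable_id'.pow_const 2)))).mul
      ((Real.measurable_exp.comp (measurable_const.div
        (measurable_const.mul (measurable_id'.pow_const 2)))).div
        (Real.continuous_sqrt.measurable.comp (measurable_const.mul (measurable_id'.pow_const 2))))
  apply Integrable.mono' ((integrable_exp_neg_mul_sq hl).integrableOn.const_mul (1/Real.sqrt π))
    hmeas.aestronglyMeasurable
  filter_upwards [self_mem_ae_restrict (measurableSet_Ioi : MeasurableSet (Ioi (0:ℝ)))] with u hu
  have hu0 : (0:ℝ) < u := hu
  have hspi : (0:ℝ) < Real.sqrt π := Real.sqrt_pos.mpr Real.pi_pos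
  have hsu : Real.sqrt (4*π*u^2) = (2 * Real.sqrt π) * u := by
    rw [Real.sqrt_mul (by positivity), Real.sqrt_sq hu0.le,
      show (4:ℝ)*π = 2^2 * π by ring, Real.sqrt_mul (by positivity),
      Real.sqrt_sq (by norm_num : (0:ℝ) ≤ 2)]
  rw [Real.norm_eq_abs, smul_eq_mul, abs_of_pos (by positivity : (0:ℝ) < 2*u), hsu]
  rw [abs_of_nonneg (by positivity)]
  have hle : Real.exp (-z^2/(4*u^2)) ≤ 1 := by
    rw [Real.exp_le_one_iff, neg_div]
    have : (0:ℝ) ≤ z^2/(4*u^2) := by positivity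
    linarith
  have hexp : (0:ℝ) < Real.exp (-l * u^2) := Real.exp_pos _
  have heq : 2*u * (Real.exp (-l*u^2) * (Real.exp (-z^2/(4*u^2)) / (2*Real.sqrt π * u)))
      = (Real.exp (-l*u^2) * Real.exp (-z^2/(4*u^2))) / Real.sqrt π := by
    field_simp
  rw [heq]
  have h2 : Real.exp (-l*u^2) * Real.exp (-z^2/(4*u^2)) ≤ Real.exp (-l*u^2) := by nlinarith
  calc (Real.exp (-l*u^2) * Real.exp (-z^2/(4*u^2))) / Real.sqrt π
      ≤ Real.exp (-l*u^2) / Real.sqrt π := by gcongr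
    _ = 1/Real.sqrt π * Real.exp (-l*u^2) := by ring


lemma gauss_y_integrable (t c : ℝ) (ht : 0 < t) :
    Integrable (fun y : ℝ => Real.exp (-(c - y)^2 / (4*t))) := by
  have h4t : (0:ℝ) < 1/(4*t) := by positivity
  have h : Integrable (fun y : ℝ => Real.exp (-(1/(4*t)) * y^2)) volume :=
    integrable_exp_neg_mul_sq h4t
  have h2 : Integrable (fun y : ℝ => Real.exp (-(1/(4*t)) * (y - c)^2)) volume :=
    h.comp_sub_right c
  have heq : (fun y : ℝ => Real.exp (-(1/(4*t)) * (y - c)^2))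
      = fun y : ℝ => Real.exp (-(c - y)^2 / (4*t)) := by
    funext y
    have h3 : -(1/(4*t)) * (y - c)^2 = -(c - y)^2 / (4*t) := by
      field_simp
      ring
    rw [h3]
  rwa [heq] at h2

lemma gauss_y_integrable' (t c : ℝ) (ht : 0 < t) :
    Integrable (fun y : ℝ => Real.exp (-(c + y)^2 / (4*t))) := by
  have h := gauss_y_integrable t (-c) ht
  have heq : (fun y : ℝ => Real.exp (-(-c - y)^2 / (4*t)))
      = fun y : ℝ => Real.exp (-(c + y)^2 / (4*t)) := by
    funext y
    rw [show -(-c - y)^2 / (4*t) = -(c + y)^2 / (4*t) by ring_nf]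
  rwa [heq] at h

lemma gauss_y_integral (t c : ℝ) (ht : 0 < t) :
    (∫ y : ℝ, Real.exp (-(c - y)^2 / (4*t))) = Real.sqrt (4*π*t) := by
  have h4t : (0:ℝ) < 1/(4*t) := by positivity
  have h1 : (∫ y : ℝ, Real.exp (-(c - y)^2 / (4*t)))
      = ∫ y : ℝ, Real.exp (-(1/(4*t)) * (y - c)^2) := by
    congr 1
    funext y
    congr 1
    field_simp
    ring
  rw [h1, integral_sub_right_eq_self (fun y => Real.exp (-(1/(4*t)) * y^2)) c, integral_gaussian]
  congr 1
  field_simp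

lemma gauss_kernel_int_le (t c : ℝ) (ht : 0 < t) :
    (∫ y in Ioi (0:ℝ), Real.exp (-(c - y)^2 / (4*t)) / Real.sqrt (4*π*t)) ≤ 1 := by
  have hs : (0:ℝ) < Real.sqrt (4*π*t) := Real.sqrt_pos.mpr (by positivity)
  have hint := (gauss_y_integrable t c ht).div_const (Real.sqrt (4*π*t))
  calc (∫ y in Ioi (0:ℝ), Real.exp (-(c - y)^2 / (4*t)) / Real.sqrt (4*π*t))
      ≤ ∫ y : ℝ, Real.exp (-(c - y)^2 / (4*t)) / Real.sqrt (4*π*t) :=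
        setIntegral_le_integral hint (Eventually.of_forall fun y => by positivity)
    _ = (∫ y : ℝ, Real.exp (-(c - y)^2 / (4*t))) / Real.sqrt (4*π*t) := integral_div _ _
    _ = 1 := by rw [gauss_y_integral t c ht]; field_simp

/-- Laplace transform of the Dirichlet heat semigroup on `(0,∞)`:
for `f` bounded measurable, `λ > 0`, `x > 0`,
`∫_0^∞ e^{-λt} Q^D_t f(x) dt
  = (1/(2√λ)) ∫_0^∞ (e^{-|x−y|√λ} − e^{-(x+y)√λ}) f(y) dy`,
where `Q^D_t f(x) = ∫_0^∞ (g(t,x−y) − g(t,x+y)) f(y) dy` and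
`g(t,z) = e^{-z²/(4t)}/√(4πt)`. -/
theorem laplace_dirichlet_semigroup
    (f : ℝ → ℝ) (hmeas : Measurable f) (K : ℝ) (hbd : ∀ y, |f y| ≤ K)
    (l x : ℝ) (hl : 0 < l) (hx : 0 < x) :
    ∫ t in Ioi (0:ℝ), Real.exp (-l * t)
        * (∫ y in Ioi (0:ℝ),
            (Real.exp (-(x - y) ^ 2 / (4 * t)) / Real.sqrt (4 * Real.pi * t)
              - Real.exp (-(x + y) ^ 2 / (4 * t)) / Real.sqrt (4 * Real.pi * t)) * f y)
      = (1 / (2 * Real.sqrt l))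
          * ∫ y in Ioi (0:ℝ),
              (Real.exp (-|x - y| * Real.sqrt l) - Real.exp (-(x + y) * Real.sqrt l)) * f y := by
  have hK : 0 ≤ K := (abs_nonneg _).trans (hbd 0)
  have hsl : (0:ℝ) < Real.sqrt l := Real.sqrt_pos.mpr hl
  set μ := volume.restrict (Ioi (0:ℝ)) with hμ
  -- kernels
  set g1 : ℝ × ℝ → ℝ := fun p => Real.exp (-(x - p.2)^2 / (4*p.1)) / Real.sqrt (4*π*p.1) with hg1
  set g2 : ℝ × ℝ → ℝ := fun p => Real.exp (-(x + p.2)^2 / (4*p.1)) / Real.sqrt (4*π*p.1) with hg2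
  have hg1m : Measurable g1 := by
    apply Measurable.div
    · exact Real.measurable_exp.comp ((((measurable_const.sub measurable_snd).pow_const 2).neg).div
        (measurable_const.mul measurable_fst))
    · exact Real.continuous_sqrt.measurable.comp (measurable_const.mul measurable_fst)
  have hg2m : Measurable g2 := by
    apply Measurable.div
    · exact Real.measurable_exp.comp ((((measurable_const.add measurable_snd).pow_const 2).neg).div
        (measurable_const.mul measurable_fst))
    · exact Real.continuous_sqrt.measurable.comp (measurable_const.mul measurable_fst)
  have hg1nn : ∀ p, 0 ≤ g1 p := fun p => by
    have := Real.exp_pos (-(x - p.2)^2 / (4*p.1))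
    have := Real.sqrt_nonneg (4*π*p.1)
    positivity
  have hg2nn : ∀ p, 0 ≤ g2 p := fun p => by
    have := Real.exp_pos (-(x + p.2)^2 / (4*p.1))
    have := Real.sqrt_nonneg (4*π*p.1)
    positivity
  set H : ℝ × ℝ → ℝ := fun p => K * (Real.exp (-l * p.1) * (g1 p + g2 p)) with hH
  have hHm : Measurable H :=
    measurable_const.mul ((Real.measurable_exp.comp (measurable_const.mul measurable_fst)).mul
      (hg1m.add hg2m))
  have hH_int : Integrable H (μ.prod μ) := by
    rw [integrable_prod_iff hHm.aestronglyMeasurable]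
    constructor
    · filter_upwards [self_mem_ae_restrict measurableSet_Ioi] with t ht
      have ht0 : (0:ℝ) < t := ht
      have h1 : Integrable (fun y => Real.exp (-(x - y)^2/(4*t))) := gauss_y_integrable t x ht0
      have h2 : Integrable (fun y => Real.exp (-(x + y)^2/(4*t))) :=
        gauss_y_integrable' t x ht0
      exact ((((h1.div_const (Real.sqrt (4*π*t))).add (h2.div_const (Real.sqrt (4*π*t)))).const_mul
        (Real.exp (-l*t))).const_mul K).restrict
    · apply Integrable.mono' (g := fun t => K * (2 * Real.exp (-l * t)))
        (((exp_neg_integrableOn_Ioi 0 hl).const_mul 2).const_mul K)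
        (hHm.norm.aestronglyMeasurable.integral_prod_right')
      filter_upwards [self_mem_ae_restrict measurableSet_Ioi] with t ht
      have ht0 : (0:ℝ) < t := ht
      rw [Real.norm_eq_abs, abs_of_nonneg (integral_nonneg fun y => norm_nonneg _)]
      have hnorm : ∀ y : ℝ, ‖H (t, y)‖
          = K * Real.exp (-l*t) * (g1 (t,y) + g2 (t,y)) := fun y => by
        rw [Real.norm_eq_abs, abs_of_nonneg]
        · ring
        · have := hg1nn (t,y); have := hg2nn (t,y)
          have := Real.exp_pos (-l*t)
          positivity
      have hi1 : IntegrableOn (fun y => g1 (t,y)) (Ioi 0) :=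
        ((gauss_y_integrable t x ht0).div_const (Real.sqrt (4*π*t))).integrableOn
      have hi2 : IntegrableOn (fun y => g2 (t,y)) (Ioi 0) :=
        ((gauss_y_integrable' t x ht0).div_const (Real.sqrt (4*π*t))).integrableOn
      have hle1 : (∫ y in Ioi (0:ℝ), g1 (t,y)) ≤ 1 := gauss_kernel_int_le t x ht0
      have hle2 : (∫ y in Ioi (0:ℝ), g2 (t,y)) ≤ 1 := by
        have heq : (∫ y in Ioi (0:ℝ), g2 (t,y))
            = ∫ y in Ioi (0:ℝ), Real.exp (-(-x - y)^2 / (4*t)) / Real.sqrt (4*π*t) := by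
          apply setIntegral_congr_fun measurableSet_Ioi
          intro y _
          simp only [hg2]
          congr 3
          ring
        rw [heq]
        exact gauss_kernel_int_le t (-x) ht0
      calc (∫ y, ‖H (t, y)‖ ∂μ)
          = K * Real.exp (-l*t) * ∫ y in Ioi (0:ℝ), (g1 (t,y) + g2 (t,y)) := by
            simp_rw [hnorm]
            rw [integral_const_mul]
        _ ≤ K * Real.exp (-l*t) * 2 := by
            have hsum : (∫ y in Ioi (0:ℝ), (g1 (t,y) + g2 (t,y)))
                = (∫ y in Ioi (0:ℝ), g1 (t,y)) + ∫ y in Ioi (0:ℝ), g2 (t,y) :=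
              integral_add hi1 hi2
            have hpos : (0:ℝ) ≤ K * Real.exp (-l*t) := by positivity
            have : (∫ y in Ioi (0:ℝ), (g1 (t,y) + g2 (t,y))) ≤ 2 := by
              rw [hsum]; linarith
            nlinarith
        _ = K * (2 * Real.exp (-l * t)) := by ring
  set F : ℝ → ℝ → ℝ := fun t y => Real.exp (-l * t) *
    ((Real.exp (-(x - y)^2 / (4*t)) / Real.sqrt (4*π*t)
      - Real.exp (-(x + y)^2 / (4*t)) / Real.sqrt (4*π*t)) * f y) with hF
  have hFm : Measurable (Function.uncurry F) :=
    (Real.measurable_exp.comp (measurable_const.mul measurable_fst)).mul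
      ((hg1m.sub hg2m).mul (hmeas.comp measurable_snd))
  have hF_int : Integrable (Function.uncurry F) (μ.prod μ) := by
    apply Integrable.mono' hH_int hFm.aestronglyMeasurable
    refine Eventually.of_forall fun p => ?_
    rcases p with ⟨t, y⟩
    have h1 := hg1nn (t,y); have h2 := hg2nn (t,y)
    have he := Real.exp_pos (-l*t)
    have habs : |g1 (t,y) - g2 (t,y)| ≤ g1 (t,y) + g2 (t,y) :=
      abs_le.mpr ⟨by linarith, by linarith⟩
    have hfy := hbd y
    have hfynn := abs_nonneg (f y)
    calc ‖Function.uncurry F (t,y)‖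
        = Real.exp (-l*t) * (|g1 (t,y) - g2 (t,y)| * |f y|) := by
          simp only [Function.uncurry, hF, hg1, hg2, Real.norm_eq_abs, abs_mul,
            abs_of_pos (Real.exp_pos (-l*t))]
      _ ≤ Real.exp (-l*t) * ((g1 (t,y) + g2 (t,y)) * K) := by
          have := mul_le_mul habs hfy hfynn (by linarith)
          nlinarith
      _ = H (t,y) := by simp only [hH]; ring
  calc (∫ t in Ioi (0:ℝ), Real.exp (-l * t)
        * (∫ y in Ioi (0:ℝ),
            (Real.exp (-(x - y) ^ 2 / (4 * t)) / Real.sqrt (4 * Real.pi * t)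
              - Real.exp (-(x + y) ^ 2 / (4 * t)) / Real.sqrt (4 * Real.pi * t)) * f y))
      = ∫ t in Ioi (0:ℝ), ∫ y in Ioi (0:ℝ), F t y := by
        apply setIntegral_congr_fun measurableSet_Ioi
        intro t _
        exact (integral_const_mul _ _).symm
    _ = ∫ y in Ioi (0:ℝ), ∫ t in Ioi (0:ℝ), F t y := integral_integral_swap hF_int
    _ = ∫ y in Ioi (0:ℝ), (1 / (2 * Real.sqrt l)) *
          ((Real.exp (-|x - y| * Real.sqrt l) - Real.exp (-(x + y) * Real.sqrt l)) * f y) := by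
        apply setIntegral_congr_fun measurableSet_Ioi
        intro y hy
        have hy0 : (0:ℝ) < y := hy
        have hxy : (0:ℝ) < x + y := by linarith
        have hsplit : ∀ t : ℝ, F t y
            = f y * (Real.exp (-l*t) * (Real.exp (-(x - y)^2 / (4*t)) / Real.sqrt (4*π*t)))
              - f y * (Real.exp (-l*t) * (Real.exp (-(x + y)^2 / (4*t)) / Real.sqrt (4*π*t))) :=
          fun t => by simp only [hF]; ring
        simp_rw [hsplit]
        rw [integral_sub ((heat_laplace_integrable l (x-y) hl).const_mul (f y))
            ((heat_laplace_integrable l (x+y) hl).const_mul (f y)),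
          integral_const_mul, integral_const_mul, heat_laplace l (x-y) hl, heat_laplace l (x+y) hl,
          abs_of_pos hxy]
        field_simp
    _ = (1 / (2 * Real.sqrt l))
          * ∫ y in Ioi (0:ℝ),
              (Real.exp (-|x - y| * Real.sqrt l) - Real.exp (-(x + y) * Real.sqrt l)) * f y :=
        integral_const_mul _ _
end

section
/- Let u : ℝ → ℝ be bounded, globally Lipschitz, and vanish on (-∞, 0]. Then for every x > 0, lim_{α→0+} (α/Γ(1−α)) ∫_0^∞ (u(x) − u(x−y)) y^{-α-1} dy = u(x); that is, the right Marchaud derivative D^α_{x+} u(x) converges to u(x) as α ↓ 0. -/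
/-!
Split the integral at `y = x`. For `y > x` the point `x - y` lies in `(-∞, 0]`, so the integrand
is `u x * y ^ (-α - 1)`, whose integral `u x * x ^ (-α) / α` turns the prefactor `α / Γ(1 - α)`
into `u x * x ^ (-α) / Γ(1 - α) → u x`. On `(0, x]` the Lipschitz bound
`|u x - u (x - y)| ≤ K y` dominates the integrand by `K y ^ (-α)`, so that part of the integral
stays bounded as `α ↓ 0` and is killed by the factor `α`.
-/

open MeasureTheory Real Set Filter Topology

open scoped NNReal

theorem tendsto_Gamma_one_sub : Tendsto (fun α : ℝ => Gamma (1 - α)) (𝓝 0) (𝓝 1) := by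
  have hΓ : Tendsto Gamma (𝓝 1) (𝓝 1) := by
    simpa only [Gamma_one] using
      (differentiableOn_Gamma_Ioi.differentiableAt (Ioi_mem_nhds one_pos)).continuousAt.tendsto
  exact hΓ.comp ((continuous_sub_left (1 : ℝ)).tendsto' 0 1 (sub_zero 1))

theorem tendsto_rpow_neg_div_Gamma_one_sub {x : ℝ} (hx : 0 < x) :
    Tendsto (fun α : ℝ => x ^ (-α) / Gamma (1 - α)) (𝓝 0) (𝓝 1) := by
  have hpow : Tendsto (fun α : ℝ => x ^ (-α)) (𝓝 0) (𝓝 (x ^ (-0 : ℝ))) :=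
    tendsto_const_nhds.rpow tendsto_id.neg (Or.inl hx.ne')
  have h : Tendsto (fun α : ℝ => x ^ (-α) / Gamma (1 - α)) (𝓝 0) (𝓝 (x ^ (-0 : ℝ) / 1)) :=
    hpow.div tendsto_Gamma_one_sub one_ne_zero
  simpa using h

theorem tendsto_mul_rpow_one_sub_div_Gamma_one_sub (C : ℝ) {x : ℝ} (hx : 0 < x) :
    Tendsto (fun α : ℝ => α / Gamma (1 - α) * (C * (x ^ (1 - α) / (1 - α)))) (𝓝 0) (𝓝 0) := by
  have hsub : Tendsto (fun α : ℝ => 1 - α) (𝓝 0) (𝓝 1) :=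
    (continuous_sub_left (1 : ℝ)).tendsto' 0 1 (sub_zero 1)
  have h : Tendsto (fun α : ℝ => α / Gamma (1 - α) * (C * (x ^ (1 - α) / (1 - α)))) (𝓝 0)
      (𝓝 (0 / 1 * (C * (x ^ (1 : ℝ) / 1)))) :=
    (tendsto_id.div tendsto_Gamma_one_sub one_ne_zero).mul
      (tendsto_const_nhds.mul ((tendsto_const_nhds.rpow hsub (Or.inl hx.ne')).div hsub one_ne_zero))
  simpa using h

theorem integrableOn_Ioc_zero_rpow {r : ℝ} (hr : -1 < r) (x : ℝ) :
    IntegrableOn (fun y : ℝ => y ^ r) (Ioc 0 x) :=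
  (intervalIntegral.intervalIntegrable_rpow' hr).def'.mono_set Ioc_subset_uIoc

section Marchaud

variable {u : ℝ → ℝ} {x α : ℝ}

theorem norm_sub_mul_rpow_le {K : ℝ≥0} (hu : LipschitzWith K u) {y : ℝ} (hy : 0 < y) :
    ‖(u x - u (x - y)) * y ^ (-α - 1)‖ ≤ K * y ^ (-α) := by
  have hdiff : |u x - u (x - y)| ≤ K * y := by
    simpa [abs_of_pos hy, ← Real.dist_eq] using hu.dist_le_mul x (x - y)
  calc ‖(u x - u (x - y)) * y ^ (-α - 1)‖ = |u x - u (x - y)| * y ^ (-α - 1) := by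
        rw [norm_mul, norm_eq_abs, norm_of_nonneg (rpow_nonneg hy.le _)]
    _ ≤ K * y * y ^ (-α - 1) := by gcongr
    _ = K * y ^ (-α) := by
        rw [rpow_sub_one hy.ne']
        field_simp

theorem integrableOn_Ioc_sub_mul_rpow {K : ℝ≥0} (hu : LipschitzWith K u) (hα : α < 1) :
    IntegrableOn (fun y => (u x - u (x - y)) * y ^ (-α - 1)) (Ioc 0 x) := by
  have hdom : IntegrableOn (fun y : ℝ => K * y ^ (-α)) (Ioc 0 x) :=
    (integrableOn_Ioc_zero_rpow (neg_lt_neg hα) x).const_mul _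
  refine hdom.mono' ?_ ((ae_restrict_iff' measurableSet_Ioc).2 <|
    .of_forall fun y hy => norm_sub_mul_rpow_le hu hy.1)
  refine ContinuousOn.aestronglyMeasurable (fun y hy => ?_) measurableSet_Ioc
  exact ((continuous_const.sub (hu.continuous.comp (continuous_sub_left x))).continuousAt.mul
    (continuousAt_rpow_const y _ (Or.inl hy.1.ne'))).continuousWithinAt

theorem norm_setIntegral_Ioc_sub_mul_rpow_le {K : ℝ≥0} (hu : LipschitzWith K u) (hx : 0 ≤ x)
    (hα : α < 1) :
    ‖∫ y in Ioc 0 x, (u x - u (x - y)) * y ^ (-α - 1)‖ ≤ K * (x ^ (1 - α) / (1 - α)) := by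
  have hdom : IntegrableOn (fun y : ℝ => K * y ^ (-α)) (Ioc 0 x) :=
    (integrableOn_Ioc_zero_rpow (neg_lt_neg hα) x).const_mul _
  calc ‖∫ y in Ioc 0 x, (u x - u (x - y)) * y ^ (-α - 1)‖ ≤ ∫ y in Ioc 0 x, K * y ^ (-α) :=
        norm_integral_le_of_norm_le hdom ((ae_restrict_iff' measurableSet_Ioc).2 <|
          .of_forall fun y hy => norm_sub_mul_rpow_le hu hy.1)
    _ = K * (x ^ (1 - α) / (1 - α)) := by
        rw [integral_const_mul, ← intervalIntegral.integral_of_le hx,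
          integral_rpow (Or.inl (by linarith)), zero_rpow (by linarith), neg_add_eq_sub]
        ring

theorem sub_mul_rpow_eqOn_Ioi (hu0 : ∀ y ≤ 0, u y = 0) :
    EqOn (fun y => (u x - u (x - y)) * y ^ (-α - 1)) (fun y => u x * y ^ (-α - 1)) (Ioi x) :=
  fun y hy => by simp [hu0 (x - y) (by linarith [mem_Ioi.1 hy])]

theorem integrableOn_Ioi_sub_mul_rpow (hu0 : ∀ y ≤ 0, u y = 0) (hx : 0 < x) (hα : 0 < α) :
    IntegrableOn (fun y => (u x - u (x - y)) * y ^ (-α - 1)) (Ioi x) :=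
  IntegrableOn.congr_fun ((integrableOn_Ioi_rpow_of_lt (by linarith) hx).const_mul (u x))
    (sub_mul_rpow_eqOn_Ioi hu0).symm measurableSet_Ioi

theorem setIntegral_Ioi_sub_mul_rpow (hu0 : ∀ y ≤ 0, u y = 0) (hx : 0 < x) (hα : 0 < α) :
    ∫ y in Ioi x, (u x - u (x - y)) * y ^ (-α - 1) = u x * (x ^ (-α) / α) := by
  rw [setIntegral_congr_fun measurableSet_Ioi (sub_mul_rpow_eqOn_Ioi hu0), integral_const_mul,
    integral_Ioi_rpow_of_lt (by linarith) hx, sub_add_cancel]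
  ring

theorem setIntegral_Ioi_zero_sub_mul_rpow {K : ℝ≥0} (hu : LipschitzWith K u)
    (hu0 : ∀ y ≤ 0, u y = 0) (hx : 0 < x) (hα : α ∈ Ioo 0 1) :
    ∫ y in Ioi 0, (u x - u (x - y)) * y ^ (-α - 1) =
      (∫ y in Ioc 0 x, (u x - u (x - y)) * y ^ (-α - 1)) + u x * (x ^ (-α) / α) := by
  rw [← Ioc_union_Ioi_eq_Ioi hx.le, setIntegral_union (Ioc_disjoint_Ioi le_rfl) measurableSet_Ioi
    (integrableOn_Ioc_sub_mul_rpow hu hα.2) (integrableOn_Ioi_sub_mul_rpow hu0 hx hα.1),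
    setIntegral_Ioi_sub_mul_rpow hu0 hx hα.1]

theorem tendsto_mul_setIntegral_Ioc_sub_mul_rpow {K : ℝ≥0} (hu : LipschitzWith K u) (hx : 0 < x) :
    Tendsto (fun α : ℝ => α / Gamma (1 - α) * ∫ y in Ioc 0 x, (u x - u (x - y)) * y ^ (-α - 1))
      (𝓝[>] 0) (𝓝 0) := by
  refine squeeze_zero_norm' ?_
    ((tendsto_mul_rpow_one_sub_div_Gamma_one_sub K hx).mono_left nhdsWithin_le_nhds)
  filter_upwards [Ioo_mem_nhdsGT one_pos] with α hα
  have hcoef : 0 ≤ α / Gamma (1 - α) :=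
    div_nonneg hα.1.le (Gamma_pos_of_pos (sub_pos.2 hα.2)).le
  rw [norm_mul, norm_of_nonneg hcoef]
  exact mul_le_mul_of_nonneg_left (norm_setIntegral_Ioc_sub_mul_rpow_le hu hx.le hα.2) hcoef

end Marchaud

theorem marchaud_limit_alpha_zero_general
    (u : ℝ → ℝ) (K : ℝ)
    (hLip : ∀ x y, |u x - u y| ≤ K * |x - y|)
    (hu0 : ∀ x ≤ (0:ℝ), u x = 0)
    (x : ℝ) (hx : 0 < x) :
    Tendsto
      (fun α : ℝ =>
        (α / Real.Gamma (1 - α)) * ∫ y in Ioi (0:ℝ), (u x - u (x - y)) * y ^ (-α - 1))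
      (𝓝[>] 0) (𝓝 (u x)) := by
  have hu : LipschitzWith K.toNNReal u := LipschitzWith.of_dist_le' hLip
  have hfar : Tendsto (fun α : ℝ => u x * (x ^ (-α) / Gamma (1 - α))) (𝓝[>] 0) (𝓝 (u x)) := by
    simpa using ((tendsto_rpow_neg_div_Gamma_one_sub hx).const_mul (u x)).mono_left
      nhdsWithin_le_nhds
  have hsum := (tendsto_mul_setIntegral_Ioc_sub_mul_rpow hu hx).add hfar
  rw [zero_add] at hsum
  refine hsum.congr' ?_
  filter_upwards [Ioo_mem_nhdsGT one_pos] with α hα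
  rw [setIntegral_Ioi_zero_sub_mul_rpow hu hu0 hx hα]
  field_simp [hα.1.ne']

/-- For `u` bounded, globally Lipschitz and vanishing on `(-∞,0]`, the right
Marchaud derivative `D^α_{x+} u(x) = (α/Γ(1−α)) ∫_0^∞ (u(x) − u(x−y)) y^{-α-1} dy`
converges to `u(x)` as `α ↓ 0`, for every `x > 0`. -/
theorem marchaud_limit_alpha_zero
    (u : ℝ → ℝ) (M K : ℝ)
    (hM : ∀ x, |u x| ≤ M)
    (hLip : ∀ x y, |u x - u y| ≤ K * |x - y|)
    (hu0 : ∀ x ≤ (0:ℝ), u x = 0)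
    (x : ℝ) (hx : 0 < x) :
    Tendsto
      (fun α : ℝ =>
        (α / Real.Gamma (1 - α)) * ∫ y in Ioi (0:ℝ), (u x - u (x - y)) * y ^ (-α - 1))
      (𝓝[>] 0) (𝓝 (u x)) :=
  marchaud_limit_alpha_zero_general u K hLip hu0 x hx
end

section
/- Let u : ℝ → ℝ be twice continuously differentiable with u, u′, u″ bounded, and vanish on (-∞, 0]. Then for every x > 0, lim_{α→1−} (α/Γ(1−α)) ∫_0^∞ (u(x) − u(x−y)) y^{-α-1} dy = u′(x); that is, the right Marchaud derivative D^α_{x+} u(x) converges to u′(x) as α ↑ 1. -/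
open MeasureTheory Real Set Filter Topology

/-! Split the integral at `y = x`. On `(0, x]`, Taylor's formula gives
`u x - u (x - y) = u' x * y + O(y²)`; the linear part contributes `u' x * x^(1-α) / (1-α)`, and
`(α / Γ(1-α)) / (1-α) = α / Γ(2-α) → 1`. The `O(y²)` part and the tail over `(x, ∞)`, where
`u (x - y) = 0`, have integrals bounded uniformly as `α → 1`, and they are killed by the factor
`α / Γ(1-α) → 0` coming from the pole of `Γ` at `0`. -/

theorem abs_sub_sub_deriv_mul_le {f : ℝ → ℝ} {C : ℝ} (hf : Differentiable ℝ f)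
    (hf' : Differentiable ℝ (deriv f)) (hC : ∀ t, |deriv (deriv f) t| ≤ C) (a b : ℝ) :
    |f b - f a - deriv f b * (b - a)| ≤ C * (b - a) ^ 2 := by
  have hderiv_sub_le : ∀ t ∈ uIcc a b, ‖deriv f t - deriv f b‖ ≤ C * |b - a| := fun t ht => by
    calc ‖deriv f t - deriv f b‖ ≤ C * ‖t - b‖ :=
          convex_univ.norm_image_sub_le_of_norm_deriv_le (fun t _ => hf' t) (fun t _ => hC t)
            (mem_univ b) (mem_univ t)
      _ ≤ C * |b - a| := by
          gcongr
          · exact (abs_nonneg _).trans (hC t)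
          · rw [Real.norm_eq_abs, abs_sub_comm]; exact abs_sub_right_of_mem_uIcc ht
  have hderiv : ∀ t ∈ uIcc a b, HasDerivWithinAt (fun t => f t - deriv f b * t)
      (deriv f t - deriv f b) (uIcc a b) t := fun t _ => by
    simpa using
      ((hf t).hasDerivAt.fun_sub ((hasDerivAt_id' t).const_mul (deriv f b))).hasDerivWithinAt
  have := convex_uIcc a b |>.norm_image_sub_le_of_norm_hasDerivWithin_le hderiv hderiv_sub_le
    left_mem_uIcc right_mem_uIcc
  calc |f b - f a - deriv f b * (b - a)|
      = ‖(f b - deriv f b * b) - (f a - deriv f b * a)‖ := by rw [Real.norm_eq_abs]; ring_nf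
    _ ≤ C * |b - a| * ‖b - a‖ := this
    _ = C * (b - a) ^ 2 := by rw [Real.norm_eq_abs, mul_assoc, abs_mul_abs_self]; ring

theorem Real.tendsto_self_mul_Gamma_nhds_zero :
    Tendsto (fun t : ℝ => t * Gamma t) (𝓝[≠] 0) (𝓝 1) := by
  have hcont : ContinuousAt (fun t : ℝ => Gamma (t + 1)) 0 := by
    refine ContinuousAt.comp' ?_ (continuous_add_const 1).continuousAt
    rw [zero_add]
    exact (differentiableAt_Gamma fun m => by linarith [(m.cast_nonneg : (0:ℝ) ≤ m)]).continuousAt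
  have := continuousAt_iff_punctured_nhds.mp hcont
  rw [zero_add, Gamma_one] at this
  exact tendsto_nhdsWithin_congr (fun t ht => Gamma_add_one ht) this

theorem Real.tendsto_one_sub_mul_Gamma_one_sub :
    Tendsto (fun α : ℝ => (1 - α) * Gamma (1 - α)) (𝓝[<] 1) (𝓝 1) := by
  refine tendsto_self_mul_Gamma_nhds_zero.comp (tendsto_nhdsWithin_iff.mpr ⟨?_, ?_⟩)
  · exact ((continuous_sub_left 1).tendsto' 1 0 (sub_self 1)).mono_left nhdsWithin_le_nhds
  · filter_upwards [self_mem_nhdsWithin] with α (hα : α < 1)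
    exact sub_ne_zero.mpr hα.ne'

theorem Real.tendsto_div_one_sub_mul_Gamma_one_sub {f : ℝ → ℝ} {L : ℝ}
    (hf : Tendsto f (𝓝[<] 1) (𝓝 L)) :
    Tendsto (fun α => f α / ((1 - α) * Gamma (1 - α))) (𝓝[<] 1) (𝓝 L) := by
  have := hf.div tendsto_one_sub_mul_Gamma_one_sub one_ne_zero
  rwa [div_one] at this

theorem integrableOn_Ioc_rpow {x r : ℝ} (hx : 0 ≤ x) (hr : -1 < r) :
    IntegrableOn (fun y : ℝ => y ^ r) (Ioc 0 x) :=
  (intervalIntegrable_iff_integrableOn_Ioc_of_le hx).mp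
    (intervalIntegral.intervalIntegrable_rpow' hr)

theorem setIntegral_Ioc_rpow {x r : ℝ} (hx : 0 ≤ x) (hr : -1 < r) :
    ∫ y in Ioc 0 x, y ^ r = x ^ (r + 1) / (r + 1) := by
  rw [← intervalIntegral.integral_of_le hx, integral_rpow (.inl hr), zero_rpow (by linarith),
    sub_zero]

theorem integrableOn_mul_rpow_and_abs_setIntegral_le {f : ℝ → ℝ} {S : Set ℝ} {C p q : ℝ}
    (hS : MeasurableSet S) (hS₀ : S ⊆ Ioi 0) (hf : Measurable f)
    (hbound : ∀ y ∈ S, |f y| ≤ C * y ^ p) (hint : IntegrableOn (fun y => y ^ (p + q)) S) :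
    IntegrableOn (fun y => f y * y ^ q) S ∧
      |∫ y in S, f y * y ^ q| ≤ C * ∫ y in S, y ^ (p + q) := by
  have hdom : ∀ᵐ y ∂volume.restrict S, ‖f y * y ^ q‖ ≤ C * y ^ (p + q) := by
    filter_upwards [ae_restrict_mem hS] with y hy
    have hy₀ : 0 < y := hS₀ hy
    rw [norm_mul, Real.norm_eq_abs, Real.norm_eq_abs, abs_of_pos (rpow_pos_of_pos hy₀ q),
      rpow_add hy₀, ← mul_assoc]
    gcongr
    exact hbound y hy
  refine ⟨(hint.const_mul C).mono' ?_ hdom, ?_⟩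
  · exact (hf.mul (measurable_id.pow_const q)).aestronglyMeasurable
  · rw [← integral_const_mul]
    exact norm_integral_le_of_norm_le (hint.const_mul C) hdom

/-- The integral of `g` against the Lévy measure `(α / Γ(1-α)) y^(-α-1) dy` of the `α`-stable
subordinator; the Marchaud derivative `D^α_{x+} u (x)` is its value at `g y = u x - u (x - y)`. -/
noncomputable def stableLevyIntegral (α : ℝ) (g : ℝ → ℝ) : ℝ :=
  α / Gamma (1 - α) * ∫ y in Ioi 0, g y * y ^ (-α - 1)

theorem abs_setIntegral_Ioi_mul_rpow_sub_le {g : ℝ → ℝ} {x s K B α : ℝ} (hx : 0 < x)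
    (hα : α ∈ Ioo 0 1) (hg : Measurable g) (hnear : ∀ y ∈ Ioc 0 x, |g y - s * y| ≤ K * y ^ 2)
    (hfar : ∀ y ∈ Ioi x, |g y| ≤ B) :
    |(∫ y in Ioi 0, g y * y ^ (-α - 1)) - s * (x ^ (1 - α) / (1 - α))|
      ≤ K * (x ^ (2 - α) / (2 - α)) + B * (x ^ (-α) / α) := by
  obtain ⟨hα₀, hα₁⟩ := hα
  obtain ⟨hnear_int, hnear_le⟩ := integrableOn_mul_rpow_and_abs_setIntegral_le
    (f := fun y => g y - s * y) (p := 2) (q := -α - 1) measurableSet_Ioc (fun y hy => hy.1)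
    (hg.sub (measurable_id.const_mul s))
    (fun y hy => by simpa only [rpow_two] using hnear y hy)
    (integrableOn_Ioc_rpow hx.le (by linarith))
  obtain ⟨hfar_int, hfar_le⟩ := integrableOn_mul_rpow_and_abs_setIntegral_le (p := 0)
    (q := -α - 1) measurableSet_Ioi (fun y hy => hx.trans hy) hg
    (fun y hy => by simpa only [rpow_zero, mul_one] using hfar y hy)
    (integrableOn_Ioi_rpow_of_lt (by linarith) hx)
  rw [setIntegral_Ioc_rpow hx.le (by linarith)] at hnear_le
  rw [integral_Ioi_rpow_of_lt (by linarith) hx] at hfar_le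
  have hlin_int : IntegrableOn (fun y => s * y ^ (-α)) (Ioc 0 x) :=
    (integrableOn_Ioc_rpow hx.le (by linarith)).const_mul s
  have hnear_eq : EqOn (fun y => g y * y ^ (-α - 1))
      (fun y => s * y ^ (-α) + (g y - s * y) * y ^ (-α - 1)) (Ioc 0 x) := fun y hy => by
    simp only [rpow_sub hy.1, rpow_one, rpow_neg hy.1.le]
    field_simp [hy.1.ne']
    ring
  have hsplit : ∫ y in Ioi 0, g y * y ^ (-α - 1) = s * (x ^ (1 - α) / (1 - α))
      + (∫ y in Ioc 0 x, (g y - s * y) * y ^ (-α - 1)) + ∫ y in Ioi x, g y * y ^ (-α - 1) := by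
    rw [← Ioc_union_Ioi_eq_Ioi hx.le, setIntegral_union (Ioc_disjoint_Ioi le_rfl)
      measurableSet_Ioi ((hlin_int.add hnear_int).congr_fun hnear_eq.symm measurableSet_Ioc)
      hfar_int, setIntegral_congr_fun measurableSet_Ioc hnear_eq, integral_add hlin_int hnear_int,
      integral_const_mul, setIntegral_Ioc_rpow hx.le (by linarith)]
    ring_nf
  rw [hsplit, add_assoc, add_sub_cancel_left]
  refine (abs_add_le _ _).trans (add_le_add (hnear_le.trans_eq ?_) (hfar_le.trans_eq ?_)) <;>
    ring_nf

theorem tendsto_stableLevyIntegral_nhdsLT_one {g : ℝ → ℝ} {x s K B : ℝ} (hx : 0 < x)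
    (hg : Measurable g) (hnear : ∀ y ∈ Ioc 0 x, |g y - s * y| ≤ K * y ^ 2)
    (hfar : ∀ y ∈ Ioi x, |g y| ≤ B) :
    Tendsto (fun α => stableLevyIntegral α g) (𝓝[<] 1) (𝓝 s) := by
  set c := fun α : ℝ => α / Gamma (1 - α)
  set X := fun α : ℝ => x ^ (1 - α) / (1 - α)
  set R := fun α : ℝ => (∫ y in Ioi 0, g y * y ^ (-α - 1)) - s * X α
  have hdecomp : ∀ α, stableLevyIntegral α g = c α * X α * s + c α * R α := fun α => by
    simp only [stableLevyIntegral, c, R]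
    ring
  have hcX : Tendsto (fun α => c α * X α) (𝓝[<] 1) (𝓝 1) := by
    have hlim : Tendsto (fun α : ℝ => α * x ^ (1 - α)) (𝓝[<] 1) (𝓝 1) := by
      have : ContinuousAt (fun α : ℝ => α * x ^ (1 - α)) 1 := by
        fun_prop (disch := positivity)
      simpa using this.tendsto.mono_left nhdsWithin_le_nhds
    refine (tendsto_div_one_sub_mul_Gamma_one_sub hlim).congr fun α => ?_
    simp only [c, X]
    rw [div_mul_div_comm, mul_comm (Gamma _)]
  have hc : Tendsto c (𝓝[<] 1) (𝓝 0) := by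
    have hlim : Tendsto (fun α : ℝ => (1 - α) * α) (𝓝[<] 1) (𝓝 0) := by
      have : ContinuousAt (fun α : ℝ => (1 - α) * α) 1 := by fun_prop
      simpa using this.tendsto.mono_left nhdsWithin_le_nhds
    refine (tendsto_div_one_sub_mul_Gamma_one_sub hlim).congr' ?_
    filter_upwards [self_mem_nhdsWithin] with α (hα : α < 1)
    exact mul_div_mul_left α _ (sub_ne_zero.mpr hα.ne')
  set h := fun α : ℝ => K * (x ^ (2 - α) / (2 - α)) + B * (x ^ (-α) / α)
  have hh : ContinuousAt h 1 := by fun_prop (disch := first | positivity | norm_num)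
  have hcR : Tendsto (fun α => c α * R α) (𝓝[<] 1) (𝓝 0) := by
    refine squeeze_zero_norm' ?_
      (by simpa using hc.abs.mul (hh.tendsto.mono_left nhdsWithin_le_nhds))
    filter_upwards [Ioo_mem_nhdsLT zero_lt_one] with α hα
    rw [norm_mul, Real.norm_eq_abs, Real.norm_eq_abs]
    exact mul_le_mul_of_nonneg_left (abs_setIntegral_Ioi_mul_rpow_sub_le hx hα hg hnear hfar)
      (abs_nonneg _)
  simpa [hdecomp] using (hcX.mul_const s).add hcR

/-- For `u` twice continuously differentiable with `u, u′, u″` bounded, vanishing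
on `(-∞,0]`, the right Marchaud derivative
`D^α_{x+} u(x) = (α/Γ(1−α)) ∫_0^∞ (u(x) − u(x−y)) y^{-α-1} dy`
converges to `u′(x)` as `α ↑ 1`, for every `x > 0`. -/
theorem marchaud_limit_alpha_one
    (u : ℝ → ℝ) (hC2 : ContDiff ℝ 2 u) (M : ℝ)
    (hbd : ∀ x, |u x| ≤ M ∧ |deriv u x| ≤ M ∧ |deriv (deriv u) x| ≤ M)
    (hu0 : ∀ x ≤ (0:ℝ), u x = 0)
    (x : ℝ) (hx : 0 < x) :
    Tendsto
      (fun α : ℝ =>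
        (α / Real.Gamma (1 - α)) * ∫ y in Ioi (0:ℝ), (u x - u (x - y)) * y ^ (-α - 1))
      (𝓝[<] 1) (𝓝 (deriv u x)) := by
  have hnear : ∀ y ∈ Ioc 0 x, |u x - u (x - y) - deriv u x * y| ≤ M * y ^ 2 := fun y _ => by
    simpa only [sub_sub_cancel] using abs_sub_sub_deriv_mul_le (hC2.differentiable two_ne_zero)
      hC2.differentiable_deriv_two (fun t => (hbd t).2.2) (x - y) x
  have hfar : ∀ y ∈ Ioi x, |u x - u (x - y)| ≤ |u x| := fun y hy => by
    rw [hu0 (x - y) (by linarith [mem_Ioi.mp hy]), sub_zero]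
  exact tendsto_stableLevyIntegral_nhdsLT_one hx
    (continuous_const.sub (hC2.continuous.comp (continuous_sub_left x))).measurable hnear hfar
end

section
/- Let u : [0,∞) → ℝ be bounded and Lipschitz continuous. Then lim_{x→0+} ∫_0^∞ (u(x+l) − u(x)) dμ(l) = ∫_0^∞ (u(l) − u(0)) dμ(l); that is, −D⁻_μ u(x) converges as x ↓ 0 to Feller's boundary integral ∫_0^∞ (u(l) − u(0)) dμ(l), and in particular the Marchaud-type boundary condition D⁻_μ u(x)|_{x=0} = 0 is equivalent to Feller's condition ∫_0^∞ (u(l) − u(0)) dμ(l) = 0. -/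
open MeasureTheory Real Set Filter Topology

/-- For `u` bounded and Lipschitz on `[0,∞)`,
`lim_{x→0⁺} ∫_0^∞ (u(x+l) − u(x)) dμ(l) = ∫_0^∞ (u(l) − u(0)) dμ(l)`; that is,
`−D⁻_μ u(x)` converges as `x ↓ 0` to Feller's boundary integral, and in
particular the condition `D⁻_μ u(x)|_{x=0} = 0` (as a limit) is equivalent to
Feller's condition `∫_0^∞ (u(l) − u(0)) dμ(l) = 0`. -/
theorem marchaud_feller_boundary
    (μ : Measure ℝ)
    (hμm : IntegrableOn (fun y => min 1 y) (Ioi 0) μ)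
    (u : ℝ → ℝ) (M K : ℝ)
    (hM : ∀ x ≥ (0:ℝ), |u x| ≤ M)
    (hLip : ∀ x ≥ (0:ℝ), ∀ y ≥ (0:ℝ), |u x - u y| ≤ K * |x - y|) :
    Tendsto (fun x => ∫ s in Ioi (0:ℝ), (u (x + s) - u x) ∂μ) (𝓝[>] 0)
      (𝓝 (∫ s in Ioi (0:ℝ), (u s - u 0) ∂μ)) ∧
    (Tendsto (fun x => ∫ s in Ioi (0:ℝ), (u x - u (x + s)) ∂μ) (𝓝[>] 0) (𝓝 0)
      ↔ ∫ s in Ioi (0:ℝ), (u s - u 0) ∂μ = 0) := by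
  have hK : 0 ≤ K := by
    have h := hLip 0 le_rfl 1 (by norm_num)
    rw [show |(0:ℝ) - 1| = 1 by norm_num, mul_one] at h
    exact le_trans (abs_nonneg _) h
  have hM0 : 0 ≤ M := le_trans (abs_nonneg _) (hM 0 le_rfl)
  -- continuity of u on [0,∞)
  have hcont : ContinuousOn u (Ici (0:ℝ)) := by
    have : LipschitzOnWith (Real.toNNReal K) u (Ici (0:ℝ)) := by
      rw [lipschitzOnWith_iff_dist_le_mul]
      intro x hx y hy
      simp only [Real.dist_eq]
      calc |u x - u y| ≤ K * |x - y| := hLip x hx y hy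
        _ ≤ (Real.toNNReal K) * |x - y| := by
            apply mul_le_mul_of_nonneg_right _ (abs_nonneg _)
            exact (Real.le_coe_toNNReal K)
    exact this.continuousOn
  -- main limit via dominated convergence
  have hTend : Tendsto (fun x => ∫ s in Ioi (0:ℝ), (u (x + s) - u x) ∂μ) (𝓝[>] 0)
      (𝓝 (∫ s in Ioi (0:ℝ), (u s - u 0) ∂μ)) := by
    apply tendsto_integral_filter_of_dominated_convergence
      (fun s => (2 * M + K) * min 1 s)
    · filter_upwards [self_mem_nhdsWithin] with x (hx : (0:ℝ) < x)
      apply ContinuousOn.aestronglyMeasurable _ measurableSet_Ioi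
      have h1 : ContinuousOn (fun s : ℝ => u (x + s)) (Ioi 0) := by
        apply hcont.comp (continuous_add_left x).continuousOn
        intro s hs
        have : (0:ℝ) < s := hs
        simp only [mem_Ici]
        linarith
      exact h1.sub continuousOn_const
    · filter_upwards [self_mem_nhdsWithin] with x (hx : (0:ℝ) < x)
      refine ae_restrict_of_forall_mem measurableSet_Ioi ?_
      intro s hs
      have hs0 : (0:ℝ) < s := hs
      rcases le_or_gt s 1 with h1 | h1
      · have : |u (x + s) - u x| ≤ K * s := by
          have := hLip (x + s) (by linarith) x (by linarith)
          have habs : |x + s - x| = s := by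
            rw [add_sub_cancel_left, abs_of_pos hs0]
          rwa [habs] at this
        calc ‖u (x + s) - u x‖ ≤ K * s := this
          _ = K * min 1 s := by rw [min_eq_right h1]
          _ ≤ (2 * M + K) * min 1 s := by
              apply mul_le_mul_of_nonneg_right (by linarith)
              exact le_min (by norm_num) hs0.le
      · have hmin : min 1 s = 1 := min_eq_left h1.le
        calc ‖u (x + s) - u x‖ ≤ |u (x + s)| + |u x| := abs_sub _ _
          _ ≤ M + M := add_le_add (hM _ (by linarith)) (hM _ hx.le)
          _ ≤ (2 * M + K) * min 1 s := by rw [hmin]; linarith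
    · exact (hμm.const_mul _)
    · refine ae_restrict_of_forall_mem measurableSet_Ioi ?_
      intro s hs
      have hs0 : (0:ℝ) < s := hs
      rw [← tendsto_sub_nhds_zero_iff]
      have hg : Tendsto (fun x : ℝ => 2 * K * x) (𝓝[>] 0) (𝓝 0) := by
        have : Tendsto (fun x : ℝ => 2 * K * x) (𝓝 0) (𝓝 (2 * K * 0)) :=
          (continuous_const.mul continuous_id).tendsto 0
        rw [mul_zero] at this
        exact this.mono_left nhdsWithin_le_nhds
      apply squeeze_zero_norm' _ hg
      · filter_upwards [self_mem_nhdsWithin] with x (hx : (0:ℝ) < x)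
        have h1 : |u (x + s) - u s| ≤ K * x := by
          have := hLip (x + s) (by linarith) s hs0.le
          have habs : |x + s - s| = x := by
            rw [add_sub_cancel_right, abs_of_pos hx]
          rwa [habs] at this
        have h2 : |u x - u 0| ≤ K * x := by
          have := hLip x hx.le 0 le_rfl
          have habs : |x - 0| = x := by rw [sub_zero, abs_of_pos hx]
          rwa [habs] at this
        calc ‖u (x + s) - u x - (u s - u 0)‖
            = |(u (x + s) - u s) - (u x - u 0)| := by rw [Real.norm_eq_abs]; ring_nf
          _ ≤ |u (x + s) - u s| + |u x - u 0| := abs_sub _ _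
          _ ≤ K * x + K * x := add_le_add h1 h2
          _ = 2 * K * x := by ring
  refine ⟨hTend, ?_⟩
  have hneg : ∀ x : ℝ, (∫ s in Ioi (0:ℝ), (u x - u (x + s)) ∂μ)
      = - ∫ s in Ioi (0:ℝ), (u (x + s) - u x) ∂μ := by
    intro x
    rw [← integral_neg]
    congr 1
    funext s
    ring
  constructor
  · intro h
    have h' : Tendsto (fun x => ∫ s in Ioi (0:ℝ), (u (x + s) - u x) ∂μ)
        (𝓝[>] 0) (𝓝 0) := by
      have := h.neg
      rw [neg_zero] at this
      simpa only [hneg, neg_neg] using this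
    exact tendsto_nhds_unique hTend h'
  · intro h
    rw [h] at hTend
    have := hTend.neg
    rw [neg_zero] at this
    simpa only [hneg] using this
end
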